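/- arXiv:2512.16118 — 6 statements merged into one kernel-verified Lean document; each statement's English description precedes it below -/
import Mathlib

section
/- A family (a_u)_{u ∈ F_q[t]} of elements of K_∞ is equidistributed in 𝕋 if and only if for every h ∈ F_q[t] \ {0}, the normalized exponential sum q^{-N} · |Σ_{u ∈ F_q[t], ord u < N} e(h·a_u)| tends to 0 as N → ∞. -/
open Polynomial

noncomputable section

/-- The field `K_∞ = F_q((1/t))`, modelled as Laurent series in `X = 1/t`. -/
abbrev Kinf (Fq : Type) [Field Fq] := LaurentSeries Fq

/-- The embedding of the polynomial ring `F_q[t]` into `K_∞`, sending `t` to `X⁻¹`,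
i.e. to the Laurent series with a single coefficient `1` in degree `-1`. -/
def polyToK (Fq : Type) [Field Fq] : Polynomial Fq →+* Kinf Fq :=
  Polynomial.eval₂RingHom (HahnSeries.C : Fq →+* Kinf Fq) (HahnSeries.single (-1 : ℤ) 1)

/-- `α ∈ K_∞` is irrational if it is not a ratio `g/h` with `g, h ∈ F_q[t]`, `h ≠ 0`. -/
def IrrationalK (Fq : Type) [Field Fq] (α : Kinf Fq) : Prop :=
  ¬ ∃ g h : Polynomial Fq, h ≠ 0 ∧ α = polyToK Fq g / polyToK Fq h

/-- Equidistribution in `𝕋`, in the cylinder-set form of Carlitz's definition: for every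
`M ≥ 1` and every tuple `(c_1, …, c_M)` of elements of `F_q`, the proportion of `u` with
`ord u < N` whose value `s u` has coefficient `c_i` at `t^{-i}` for `1 ≤ i ≤ M`
(the coefficient of `t^{-i}` being the `HahnSeries` coefficient at `i`) tends to `q^{-M}`. -/
def Equidistributed (Fq : Type) [Field Fq] [Fintype Fq]
    (s : Polynomial Fq → Kinf Fq) : Prop :=
  ∀ M : ℕ, 1 ≤ M → ∀ c : Fin M → Fq,
    Filter.Tendsto
      (fun N : ℕ =>
        (Nat.card {u : Polynomial Fq //
            u.degree < (N : ℕ) ∧ ∀ i : Fin M, (s u).coeff ((i : ℤ) + 1) = c i} : ℝ)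
          / (Fintype.card Fq : ℝ) ^ N)
      Filter.atTop (nhds (((Fintype.card Fq : ℝ) ^ M)⁻¹))

/-- The finset of polynomials `u ∈ F_q[t]` with `ord u = deg u < N`. -/
def polysDegLT (Fq : Type) [Field Fq] [Fintype Fq] (N : ℕ) : Finset (Polynomial Fq) :=
  letI := Classical.decEq (Polynomial Fq)
  Finset.image
    (fun c : Fin N → Fq => ∑ i : Fin N, Polynomial.C (c i) * Polynomial.X ^ (i : ℕ))
    Finset.univ

/-- The trace map `tr : F_q → F_p`. -/
def trFq (p : ℕ) (Fq : Type) [Field Fq] [CharP Fq p] (a : Fq) : ZMod p :=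
  letI := ZMod.algebra Fq p
  Algebra.trace (ZMod p) Fq a

/-- The additive character `e : K_∞ → ℂ`, `e(α) = exp(2πi·tr(res α)/p)`, where
`res α` is the coefficient of `t^{-1}` in `α`. -/
def eChar (p : ℕ) (Fq : Type) [Field Fq] [CharP Fq p] (α : Kinf Fq) : ℂ :=
  Complex.exp (2 * Real.pi * Complex.I * ((trFq p Fq (α.coeff 1)).val : ℂ) / p)

/-- The map `ψ_l : K_∞ → K_∞`, `ψ_l(Σ_i a_i t^i) = Σ_j a_{pj+l}^{1/p} t^j`, where
`b ↦ b^{1/p} = b^{p^{m-1}}` inverts the Frobenius on `F_q` (`q = p^m`).  In terms of the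
`HahnSeries` (i.e. `X = 1/t`) coefficients, the coefficient of `ψ_l α` at `n` is
`(α.coeff (p*n - l))^(p^(m-1))`. -/
def psiL (p m : ℕ) [Fact p.Prime] (Fq : Type) [Field Fq] (l : ℤ) (α : Kinf Fq) : Kinf Fq where
  coeff := fun n => (α.coeff ((p : ℤ) * n - l)) ^ (p ^ (m - 1))
  isPWO_support' := by
    have hp : (0 : ℤ) < (p : ℤ) := by exact_mod_cast (Fact.out : p.Prime).pos
    have hsub : (Function.support fun n : ℤ =>
        (α.coeff ((p : ℤ) * n - l)) ^ (p ^ (m - 1))) ⊆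
        (fun i : ℤ => (i + l) / (p : ℤ)) '' α.support := by
      intro n hn
      have hne : α.coeff ((p : ℤ) * n - l) ≠ 0 := by
        intro h0
        apply hn
        simp only [Function.mem_support, ne_eq, not_not]
        rw [h0]
        exact zero_pow (pow_ne_zero _ (Fact.out : p.Prime).ne_zero)
      refine ⟨(p : ℤ) * n - l, hne, ?_⟩
      show ((p : ℤ) * n - l + l) / (p : ℤ) = n
      rw [sub_add_cancel, Int.mul_ediv_cancel_left _ (ne_of_gt hp)]
    exact ((α.isPWO_support).image_of_monotone
      (fun a b hab => Int.ediv_le_ediv hp (by omega))).mono hsub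

/-- The map `ψ = ψ_{p-1}` satisfying `e(α ξ^p) = e(ψ(α) ξ)`. -/
def psiK (p m : ℕ) [Fact p.Prime] (Fq : Type) [Field Fq] (α : Kinf Fq) : Kinf Fq :=
  psiL p m Fq ((p : ℤ) - 1) α

/-- A polynomial `A ∈ K_∞[x]` is additive if `A(x+y) = A(x) + A(y)` in `K_∞[x,y]`
(modelled as `K_∞[x][y]`, with `x = C X` and `y = X`). -/
def IsAdditive (Fq : Type) [Field Fq] (A : Polynomial (Kinf Fq)) : Prop :=
  A.eval₂ ((Polynomial.C).comp (Polynomial.C)) (Polynomial.C Polynomial.X + Polynomial.X) =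
    A.eval₂ ((Polynomial.C).comp (Polynomial.C)) (Polynomial.C Polynomial.X) +
      A.eval₂ ((Polynomial.C).comp (Polynomial.C)) (Polynomial.X :
        Polynomial (Polynomial (Kinf Fq)))

/-- The map `τ`: for an additive polynomial `A(x) = Σ_ν α_ν x^{p^ν}` one has
`τ(A) = Σ_ν ψ^ν(α_ν)`. -/
def tauK (p m : ℕ) [Fact p.Prime] (Fq : Type) [Field Fq] (A : Polynomial (Kinf Fq)) :
    Kinf Fq :=
  ∑ ν ∈ Finset.range (A.natDegree + 1), (psiK p m Fq)^[ν] (A.coeff (p ^ ν))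

end
noncomputable section Aux

open Filter

variable (p m : ℕ) [Fact p.Prime] (Fq : Type) [Field Fq] [Fintype Fq] [CharP Fq p]

/-- The trace as an additive monoid hom. -/
def trHom : Fq →+ ZMod p :=
  letI := ZMod.algebra Fq p
  (Algebra.trace (ZMod p) Fq).toAddMonoidHom

lemma trHom_apply (x : Fq) : trHom p Fq x = trFq p Fq x := rfl

/-- The character `e_q` as an `AddChar`. -/
def psiChar : AddChar Fq ℂ :=
  haveI : NeZero p := ⟨(Fact.out : p.Prime).ne_zero⟩
  (ZMod.stdAddChar).compAddMonoidHom (trHom p Fq)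

lemma psiChar_apply (x : Fq) :
    psiChar p Fq x =
      Complex.exp (2 * Real.pi * Complex.I * ((trFq p Fq x).val : ℂ) / p) := by
  haveI : NeZero p := ⟨(Fact.out : p.Prime).ne_zero⟩
  rw [psiChar, AddChar.compAddMonoidHom_apply, ZMod.stdAddChar_apply, ZMod.toCircle_apply,
    trHom_apply]

lemma eChar_eq_psiChar (α : Kinf Fq) : eChar p Fq α = psiChar p Fq (α.coeff 1) := by
  rw [psiChar_apply, eChar]

lemma psiChar_ne_one : psiChar p Fq ≠ 1 := by
  haveI : NeZero p := ⟨(Fact.out : p.Prime).ne_zero⟩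
  haveI : Fact (1 < p) := ⟨(Fact.out : p.Prime).one_lt⟩
  letI := ZMod.algebra Fq p
  haveI : FiniteDimensional (ZMod p) Fq := Module.Finite.of_finite
  obtain ⟨x, hx⟩ := Algebra.trace_surjective (ZMod p) Fq (1 : ZMod p)
  rw [AddChar.ne_one_iff]
  refine ⟨x, ?_⟩
  have hpsi : psiChar p Fq x = ZMod.stdAddChar (1 : ZMod p) := by
    rw [psiChar, AddChar.compAddMonoidHom_apply]
    exact congrArg _ hx
  rw [hpsi]
  intro h1
  have h0 : ZMod.stdAddChar (1 : ZMod p) = ZMod.stdAddChar (0 : ZMod p) := by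
    rw [h1, AddChar.map_zero_eq_one]
  exact one_ne_zero (ZMod.injective_stdAddChar h0)

lemma sum_psiChar [DecidableEq Fq] (b : Fq) :
    ∑ x : Fq, psiChar p Fq (x * b) = if b = 0 then (Fintype.card Fq : ℂ) else 0 := by
  classical
  split_ifs with hb
  · subst hb
    simp [AddChar.map_zero_eq_one, Finset.card_univ]
  · have h1 : ∀ x : Fq, psiChar p Fq (x * b) = (psiChar p Fq).mulShift b x := by
      intro x; rw [AddChar.mulShift_apply, mul_comm]
    simp_rw [h1]
    have h2 : (psiChar p Fq).mulShift b ≠ 0 := by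
      have h0 : (0 : AddChar Fq ℂ) = 1 := rfl
      rw [h0]
      exact fun hone => psiChar_ne_one p Fq
        ((AddChar.mulShift_unit_eq_one_iff _ (isUnit_iff_ne_zero.2 hb)).1 hone)
    rw [AddChar.sum_eq_ite]
    simp [h2]

lemma psiChar_map_sum {ι : Type*} (s : Finset ι) (f : ι → Fq) :
    psiChar p Fq (∑ i ∈ s, f i) = ∏ i ∈ s, psiChar p Fq (f i) := by
  classical
  induction s using Finset.induction_on with
  | empty => simp [AddChar.map_zero_eq_one]
  | @insert a s h ih => rw [Finset.sum_insert h, Finset.prod_insert h, AddChar.map_add_eq_mul, ih]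

lemma orth [DecidableEq Fq] (M : ℕ) (β : Fin M → Fq) :
    ∑ d : Fin M → Fq, ∏ i, psiChar p Fq (d i * β i)
      = if ∀ i, β i = 0 then ((Fintype.card Fq : ℂ)) ^ M else 0 := by
  classical
  have h1 : ∑ d : Fin M → Fq, ∏ i, psiChar p Fq (d i * β i)
      = ∏ i : Fin M, ∑ x : Fq, psiChar p Fq (x * β i) := by
    rw [Finset.prod_univ_sum (fun _ : Fin M => Finset.univ)
      (fun i x => psiChar p Fq (x * β i)), Fintype.piFinset_univ]
  rw [h1]
  simp_rw [sum_psiChar p Fq]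
  split_ifs with hall
  · rw [Finset.prod_congr rfl (fun i _ => if_pos (hall i)), Finset.prod_const, Finset.card_univ,
      Fintype.card_fin]
  · push_neg at hall
    obtain ⟨i, hi⟩ := hall
    exact Finset.prod_eq_zero (Finset.mem_univ i) (if_neg hi)

end Aux

noncomputable section Aux2

variable (Fq : Type) [Field Fq] [Fintype Fq]

/-- Parametrization of polynomials of degree `< M` by coefficient tuples. -/
def pparam (M : ℕ) (d : Fin M → Fq) : Polynomial Fq :=
  ∑ i : Fin M, Polynomial.C (d i) * Polynomial.X ^ (i : ℕ)

lemma pparam_coeff (M : ℕ) (d : Fin M → Fq) (k : ℕ) :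
    (pparam Fq M d).coeff k = if hk : k < M then d ⟨k, hk⟩ else 0 := by
  classical
  rw [pparam, Polynomial.finset_sum_coeff]
  simp_rw [Polynomial.coeff_C_mul, Polynomial.coeff_X_pow, mul_ite, mul_one, mul_zero]
  split_ifs with hk
  · rw [Finset.sum_eq_single (⟨k, hk⟩ : Fin M)]
    · simp
    · intro b _ hb
      exact if_neg (fun h => hb (by apply Fin.ext; simp [h]))
    · simp
  · exact Finset.sum_eq_zero fun i _ => if_neg (fun h => hk (by rw [h]; exact i.isLt))

lemma pparam_injective (M : ℕ) : Function.Injective (pparam Fq M) := by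
  intro d e h
  funext i
  have h2 := congrArg (fun g => Polynomial.coeff g (i : ℕ)) h
  simpa [pparam_coeff, i.isLt] using h2

lemma pparam_degree_lt (M : ℕ) (d : Fin M → Fq) : (pparam Fq M d).degree < (M : ℕ) := by
  refine lt_of_le_of_lt (Polynomial.degree_sum_le _ _) ?_
  refine (Finset.sup_lt_iff (WithBot.bot_lt_coe M)).2 fun i _ => ?_
  refine lt_of_le_of_lt (Polynomial.degree_C_mul_X_pow_le _ _) ?_
  exact Nat.cast_lt.mpr i.isLt

lemma mem_polysDegLT (N : ℕ) (u : Polynomial Fq) :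
    u ∈ polysDegLT Fq N ↔ u.degree < (N : ℕ) := by
  letI := Classical.decEq (Polynomial Fq)
  have himg : polysDegLT Fq N = Finset.image (pparam Fq N) Finset.univ := rfl
  rw [himg]
  constructor
  · intro hu
    obtain ⟨c, -, rfl⟩ := Finset.mem_image.1 hu
    exact pparam_degree_lt Fq N c
  · intro hu
    refine Finset.mem_image.2 ⟨fun i => u.coeff (i : ℕ), Finset.mem_univ _, ?_⟩
    show pparam Fq N (fun i => u.coeff (i : ℕ)) = u
    ext k
    rw [pparam_coeff]
    split_ifs with hk
    · rfl
    · exact (Polynomial.coeff_eq_zero_of_degree_lt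
        (hu.trans_le (by exact_mod_cast Nat.le_of_not_lt hk))).symm

lemma sum_polysDegLT (N : ℕ) (F : Polynomial Fq → ℂ) :
    ∑ u ∈ polysDegLT Fq N, F u = ∑ d : Fin N → Fq, F (pparam Fq N d) := by
  letI := Classical.decEq (Polynomial Fq)
  have himg : polysDegLT Fq N = Finset.image (pparam Fq N) Finset.univ := rfl
  rw [himg]
  exact Finset.sum_image fun a _ b _ h => pparam_injective Fq N h

lemma card_polysDegLT (N : ℕ) : (polysDegLT Fq N).card = Fintype.card Fq ^ N := by
  letI := Classical.decEq (Polynomial Fq)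
  have himg : polysDegLT Fq N = Finset.image (pparam Fq N) Finset.univ := rfl
  rw [himg, Finset.card_image_of_injective _ (pparam_injective Fq N), Finset.card_univ]
  simp

lemma polyToK_pparam (M : ℕ) (d : Fin M → Fq) :
    polyToK Fq (pparam Fq M d) = ∑ i : Fin M, HahnSeries.single (-(i : ℤ)) (d i) := by
  rw [pparam, map_sum]
  refine Finset.sum_congr rfl fun i _ => ?_
  rw [map_mul, map_pow]
  have hC : polyToK Fq (Polynomial.C (d i)) = HahnSeries.C (d i) := Polynomial.eval₂_C _ _
  have hX : polyToK Fq Polynomial.X = HahnSeries.single (-1 : ℤ) 1 := Polynomial.eval₂_X _ _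
  rw [hC, hX, HahnSeries.single_pow, HahnSeries.C_apply, HahnSeries.single_mul_single]
  congr 1
  · simp
  · simp

lemma coeff_polyToK_mul (M : ℕ) (d : Fin M → Fq) (α : Kinf Fq) :
    (polyToK Fq (pparam Fq M d) * α).coeff 1
      = ∑ i : Fin M, d i * α.coeff ((i : ℤ) + 1) := by
  rw [polyToK_pparam, Finset.sum_mul]
  have hsum : (∑ i : Fin M, HahnSeries.single (-(i : ℤ)) (d i) * α).coeff (1 : ℤ)
      = ∑ i : Fin M, (HahnSeries.single (-(i : ℤ)) (d i) * α).coeff (1 : ℤ) :=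
    map_sum (HahnSeries.coeff.addMonoidHom (1 : ℤ)) _ _
  rw [hsum]
  refine Finset.sum_congr rfl fun i _ => ?_
  conv_lhs => rw [show (1 : ℤ) = ((i : ℤ) + 1) + (-(i : ℤ)) by ring]
  exact HahnSeries.coeff_single_mul_add

end Aux2

noncomputable section Aux3

open Filter

variable (p m : ℕ) [Fact p.Prime] (Fq : Type) [Field Fq] [Fintype Fq] [CharP Fq p]

lemma orth' [DecidableEq Fq] (M : ℕ) (β : Fin M → Fq) :
    ∑ d : Fin M → Fq, ∏ i, psiChar p Fq (β i * d i)
      = if ∀ i, β i = 0 then ((Fintype.card Fq : ℂ)) ^ M else 0 := by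
  refine Eq.trans ?_ (orth p Fq M β)
  exact Finset.sum_congr rfl fun d _ => Finset.prod_congr rfl fun i _ => by rw [mul_comm]

lemma eChar_pparam_mul (M : ℕ) (d : Fin M → Fq) (α : Kinf Fq) :
    eChar p Fq (polyToK Fq (pparam Fq M d) * α)
      = ∏ i, psiChar p Fq (d i * α.coeff ((i : ℤ) + 1)) := by
  rw [eChar_eq_psiChar, coeff_polyToK_mul, psiChar_map_sum]

lemma cnt_eq [DecidableEq Fq] (s : Polynomial Fq → Kinf Fq) (M N : ℕ) (c : Fin M → Fq) :
    (Nat.card {u : Polynomial Fq //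
        u.degree < (N : ℕ) ∧ ∀ i : Fin M, (s u).coeff ((i : ℤ) + 1) = c i} : ℂ)
      = ∑ u ∈ polysDegLT Fq N,
          if (∀ i : Fin M, (s u).coeff ((i : ℤ) + 1) = c i) then 1 else 0 := by
  classical
  have he : {u : Polynomial Fq // u.degree < (N : ℕ) ∧
        ∀ i : Fin M, (s u).coeff ((i : ℤ) + 1) = c i}
      ≃ {u // u ∈ (polysDegLT Fq N).filter
          (fun u => ∀ i : Fin M, (s u).coeff ((i : ℤ) + 1) = c i)} :=
    Equiv.subtypeEquivRight fun u => by
      simp [Finset.mem_filter, mem_polysDegLT]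
  rw [Nat.card_congr he, Nat.card_eq_finsetCard, Finset.card_filter]
  push_cast
  rfl

lemma key [DecidableEq Fq] (s : Polynomial Fq → Kinf Fq) (M N : ℕ) (c : Fin M → Fq) :
    (Fintype.card Fq : ℂ) ^ M *
      (Nat.card {u : Polynomial Fq //
        u.degree < (N : ℕ) ∧ ∀ i : Fin M, (s u).coeff ((i : ℤ) + 1) = c i} : ℂ)
      = ∑ d : Fin M → Fq, (∏ i, psiChar p Fq (d i * (- c i))) *
          ∑ u ∈ polysDegLT Fq N, eChar p Fq (polyToK Fq (pparam Fq M d) * s u) := by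
  classical
  have hR : ∀ d : Fin M → Fq, (∏ i, psiChar p Fq (d i * (- c i))) *
          ∑ u ∈ polysDegLT Fq N, eChar p Fq (polyToK Fq (pparam Fq M d) * s u)
      = ∑ u ∈ polysDegLT Fq N,
          ∏ i, psiChar p Fq (d i * ((s u).coeff ((i : ℤ) + 1) - c i)) := by
    intro d
    rw [Finset.mul_sum]
    refine Finset.sum_congr rfl fun u _ => ?_
    rw [eChar_pparam_mul, ← Finset.prod_mul_distrib]
    refine Finset.prod_congr rfl fun i _ => ?_
    rw [← AddChar.map_add_eq_mul]
    congr 1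
    ring
  simp_rw [hR]
  rw [Finset.sum_comm, cnt_eq Fq s M N c, Finset.mul_sum]
  refine Finset.sum_congr rfl fun u _ => ?_
  rw [orth p Fq M (fun i => (s u).coeff ((i : ℤ) + 1) - c i)]
  by_cases hA : ∀ i : Fin M, (s u).coeff ((i : ℤ) + 1) = c i
  · rw [if_pos hA, if_pos (by simpa [sub_eq_zero] using hA), mul_one]
  · rw [if_neg hA, if_neg (by simpa [sub_eq_zero] using hA), mul_zero]

end Aux3

open Filter


/-- Carlitz's Weyl criterion, Theorem 2.1.  A family `(a_u)_{u ∈ F_q[t]}`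
is equidistributed in `𝕋` iff for every nonzero `h ∈ F_q[t]` the normalized exponential sum
`q^{-N} |Σ_{ord u < N} e(h a_u)|` tends to `0`. -/
theorem statement1 (p m : ℕ) [Fact p.Prime] (hm : m ≠ 0)
    (Fq : Type) [Field Fq] [Fintype Fq] [CharP Fq p] (hq : Fintype.card Fq = p ^ m)
    (a : Polynomial Fq → Kinf Fq) :
    Equidistributed Fq a ↔
      ∀ h : Polynomial Fq, h ≠ 0 →
        Filter.Tendsto
          (fun N : ℕ =>
            ((Fintype.card Fq : ℝ) ^ N)⁻¹ *
              ‖∑ u ∈ polysDegLT Fq N, eChar p Fq (polyToK Fq h * a u)‖)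
          Filter.atTop (nhds 0) := by
  classical
  have hq0 : (0 : ℝ) < (Fintype.card Fq : ℝ) := by
    exact_mod_cast Fintype.card_pos
  have hqC : (Fintype.card Fq : ℂ) ≠ 0 := by
    exact_mod_cast Fintype.card_pos.ne'
  constructor
  · -- Equidistributed → exponential sums tend to 0
    intro hE h hh
    set M : ℕ := h.natDegree + 1 with hM
    set d : Fin M → Fq := fun i => h.coeff (i : ℕ) with hdd
    have hd : h = pparam Fq M d := by
      ext k
      rw [pparam_coeff]
      split_ifs with hk
      · rfl
      · exact Polynomial.coeff_eq_zero_of_natDegree_lt (by omega)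
    have hdne : ¬ ∀ i : Fin M, d i = 0 := by
      intro hall
      have := hall ⟨h.natDegree, by omega⟩
      simp only [hdd] at this
      exact Polynomial.leadingCoeff_ne_zero.mpr hh this
    have hcnt : ∀ c : Fin M → Fq,
        Tendsto (fun N : ℕ => ((Nat.card {u : Polynomial Fq //
            u.degree < (N : ℕ) ∧ ∀ i : Fin M, (a u).coeff ((i : ℤ) + 1) = c i} : ℂ))
              / (Fintype.card Fq : ℂ) ^ N) atTop
          (nhds (((Fintype.card Fq : ℂ) ^ M)⁻¹)) := by
      intro c
      have h1 := Filter.tendsto_ofReal_iff.mpr (hE M (by omega) c)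
      have hfun : (fun N : ℕ => (((Nat.card {u : Polynomial Fq //
            u.degree < (N : ℕ) ∧ ∀ i : Fin M, (a u).coeff ((i : ℤ) + 1) = c i} : ℝ)
              / (Fintype.card Fq : ℝ) ^ N : ℝ) : ℂ))
          = fun N : ℕ => ((Nat.card {u : Polynomial Fq //
            u.degree < (N : ℕ) ∧ ∀ i : Fin M, (a u).coeff ((i : ℤ) + 1) = c i} : ℂ))
              / (Fintype.card Fq : ℂ) ^ N := by
        funext N
        push_cast
        ring
      rw [hfun] at h1
      have hL : ((((Fintype.card Fq : ℝ) ^ M)⁻¹ : ℝ) : ℂ)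
          = ((Fintype.card Fq : ℂ) ^ M)⁻¹ := by
        push_cast
        ring
      rwa [hL] at h1
    have hfib : ∀ N : ℕ, ∑ u ∈ polysDegLT Fq N, eChar p Fq (polyToK Fq h * a u)
        = ∑ cc : Fin M → Fq, (∏ i, psiChar p Fq (d i * cc i)) *
            (Nat.card {u : Polynomial Fq //
              u.degree < (N : ℕ) ∧ ∀ i : Fin M, (a u).coeff ((i : ℤ) + 1) = cc i} : ℂ) := by
      intro N
      have h2 : ∀ u, eChar p Fq (polyToK Fq h * a u)
          = ∏ i, psiChar p Fq (d i * (a u).coeff ((i : ℤ) + 1)) := by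
        intro u
        rw [hd, eChar_pparam_mul]
      simp_rw [h2]
      rw [show (∑ u ∈ polysDegLT Fq N, ∏ i, psiChar p Fq (d i * (a u).coeff ((i : ℤ) + 1)))
          = ∑ cc : Fin M → Fq, ∑ u ∈ (polysDegLT Fq N).filter
              (fun u => (fun i : Fin M => (a u).coeff ((i : ℤ) + 1)) = cc),
              ∏ i, psiChar p Fq (d i * cc i) from
            (Finset.sum_fiberwise' (polysDegLT Fq N)
              (fun u => fun i : Fin M => (a u).coeff ((i : ℤ) + 1))
              (fun cc => ∏ i, psiChar p Fq (d i * cc i))).symm]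
      refine Finset.sum_congr rfl fun cc _ => ?_
      rw [Finset.sum_const, nsmul_eq_mul, mul_comm, cnt_eq Fq a M N cc, Finset.card_filter]
      push_cast
      congr 1
      refine Finset.sum_congr rfl fun u _ => ?_
      by_cases hcu : ∀ i : Fin M, (a u).coeff ((i : ℤ) + 1) = cc i
      · rw [if_pos (funext hcu), if_pos hcu]
      · rw [if_neg (fun hfe => hcu fun i => congrFun hfe i), if_neg hcu]
    have hC : Tendsto (fun N : ℕ => ((Fintype.card Fq : ℂ) ^ N)⁻¹ *
        ∑ u ∈ polysDegLT Fq N, eChar p Fq (polyToK Fq h * a u)) atTop (nhds 0) := by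
      have heq : (fun N : ℕ => ((Fintype.card Fq : ℂ) ^ N)⁻¹ *
          ∑ u ∈ polysDegLT Fq N, eChar p Fq (polyToK Fq h * a u))
          = fun N : ℕ => ∑ cc : Fin M → Fq, (∏ i, psiChar p Fq (d i * cc i)) *
            ((Nat.card {u : Polynomial Fq //
              u.degree < (N : ℕ) ∧ ∀ i : Fin M, (a u).coeff ((i : ℤ) + 1) = cc i} : ℂ)
                / (Fintype.card Fq : ℂ) ^ N) := by
        funext N
        rw [hfib N, Finset.mul_sum]
        refine Finset.sum_congr rfl fun cc _ => ?_
        ring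
      rw [heq]
      have hlim := tendsto_finset_sum Finset.univ
        (fun (cc : Fin M → Fq) (_ : cc ∈ Finset.univ) => (tendsto_const_nhds
          (x := ∏ i, psiChar p Fq (d i * cc i)) (f := atTop)).mul (hcnt cc))
      have hzero : (∑ cc : Fin M → Fq, (∏ i, psiChar p Fq (d i * cc i)) *
          ((Fintype.card Fq : ℂ) ^ M)⁻¹) = 0 := by
        rw [← Finset.sum_mul, orth' p Fq M d, if_neg hdne, zero_mul]
      rwa [hzero] at hlim
    have hnorm := tendsto_zero_iff_norm_tendsto_zero.mp hC
    refine hnorm.congr fun N => ?_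
    rw [norm_mul, norm_inv, norm_pow, Complex.norm_natCast]
  · -- exponential sums tend to 0 → Equidistributed
    intro hS M hM1 c
    have hkey := fun N : ℕ => key p Fq a M N c
    have hT : ∀ d : Fin M → Fq, d ≠ 0 →
        Tendsto (fun N : ℕ => ((Fintype.card Fq : ℂ) ^ N)⁻¹ *
          ∑ u ∈ polysDegLT Fq N, eChar p Fq (polyToK Fq (pparam Fq M d) * a u))
          atTop (nhds 0) := by
      intro d hd0
      have hpne : pparam Fq M d ≠ 0 := by
        intro h0
        apply hd0
        have h1 : pparam Fq M d = pparam Fq M 0 := by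
          rw [h0]
          ext k
          rw [pparam_coeff]
          simp
        exact pparam_injective Fq M h1
      have h2 := hS (pparam Fq M d) hpne
      rw [tendsto_zero_iff_norm_tendsto_zero]
      refine h2.congr fun N => ?_
      rw [norm_mul, norm_inv, norm_pow, Complex.norm_natCast]
    have hT0 : ∀ N : ℕ, ((Fintype.card Fq : ℂ) ^ N)⁻¹ *
        ∑ u ∈ polysDegLT Fq N, eChar p Fq (polyToK Fq (pparam Fq M (0 : Fin M → Fq)) * a u)
          = 1 := by
      intro N
      have hp0 : pparam Fq M (0 : Fin M → Fq) = 0 := by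
        ext k
        rw [pparam_coeff]
        simp
      have he1 : ∀ u : Polynomial Fq,
          eChar p Fq (polyToK Fq (pparam Fq M (0 : Fin M → Fq)) * a u) = 1 := by
        intro u
        rw [hp0, map_zero, zero_mul, eChar_eq_psiChar]
        simp [AddChar.map_zero_eq_one]
      simp_rw [he1]
      rw [Finset.sum_const, card_polysDegLT, nsmul_eq_mul, mul_one]
      push_cast
      rw [inv_mul_cancel₀ (pow_ne_zero _ hqC)]
    have hCgoal : Tendsto (fun N : ℕ => ((Nat.card {u : Polynomial Fq //
        u.degree < (N : ℕ) ∧ ∀ i : Fin M, (a u).coeff ((i : ℤ) + 1) = c i} : ℂ))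
          / (Fintype.card Fq : ℂ) ^ N) atTop
        (nhds (((Fintype.card Fq : ℂ) ^ M)⁻¹)) := by
      have hMne : ((Fintype.card Fq : ℂ) ^ M) ≠ 0 := pow_ne_zero _ hqC
      have heq : (fun N : ℕ => ((Nat.card {u : Polynomial Fq //
          u.degree < (N : ℕ) ∧ ∀ i : Fin M, (a u).coeff ((i : ℤ) + 1) = c i} : ℂ))
            / (Fintype.card Fq : ℂ) ^ N)
          = fun N : ℕ => ((Fintype.card Fq : ℂ) ^ M)⁻¹ *
              ∑ d : Fin M → Fq, (∏ i, psiChar p Fq (d i * (- c i))) *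
                (((Fintype.card Fq : ℂ) ^ N)⁻¹ *
                  ∑ u ∈ polysDegLT Fq N, eChar p Fq (polyToK Fq (pparam Fq M d) * a u)) := by
        funext N
        have hNne : ((Fintype.card Fq : ℂ) ^ N) ≠ 0 := pow_ne_zero _ hqC
        have h2 : ∑ d : Fin M → Fq, (∏ i, psiChar p Fq (d i * (- c i))) *
            (((Fintype.card Fq : ℂ) ^ N)⁻¹ *
              ∑ u ∈ polysDegLT Fq N, eChar p Fq (polyToK Fq (pparam Fq M d) * a u))
            = ((Fintype.card Fq : ℂ) ^ N)⁻¹ *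
              ∑ d : Fin M → Fq, (∏ i, psiChar p Fq (d i * (- c i))) *
                ∑ u ∈ polysDegLT Fq N, eChar p Fq (polyToK Fq (pparam Fq M d) * a u) := by
          rw [Finset.mul_sum]
          exact Finset.sum_congr rfl fun d _ => by ring
        rw [h2, ← hkey N]
        field_simp
      rw [heq]
      have hlim : Tendsto (fun N : ℕ =>
          ∑ d : Fin M → Fq, (∏ i, psiChar p Fq (d i * (- c i))) *
            (((Fintype.card Fq : ℂ) ^ N)⁻¹ *
              ∑ u ∈ polysDegLT Fq N, eChar p Fq (polyToK Fq (pparam Fq M d) * a u)))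
          atTop (nhds (∑ d : Fin M → Fq, if d = 0 then
            (∏ i, psiChar p Fq (d i * (- c i))) else 0)) := by
        refine tendsto_finset_sum _ fun d _ => ?_
        by_cases hd0 : d = 0
        · subst hd0
          rw [if_pos rfl]
          have hconst : (fun N : ℕ => (∏ i, psiChar p Fq ((0 : Fin M → Fq) i * (- c i))) *
              (((Fintype.card Fq : ℂ) ^ N)⁻¹ *
                ∑ u ∈ polysDegLT Fq N,
                  eChar p Fq (polyToK Fq (pparam Fq M (0 : Fin M → Fq)) * a u)))
              = fun _ : ℕ => (∏ i, psiChar p Fq ((0 : Fin M → Fq) i * (- c i))) := by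
            funext N
            rw [hT0 N, mul_one]
          rw [hconst]
          exact tendsto_const_nhds
        · rw [if_neg hd0]
          simpa using (tendsto_const_nhds
            (x := ∏ i, psiChar p Fq (d i * (- c i))) (f := atTop)).mul (hT d hd0)
      have hsum : (∑ d : Fin M → Fq, if d = 0 then
          (∏ i, psiChar p Fq (d i * (- c i))) else 0) = 1 := by
        rw [Finset.sum_ite_eq' Finset.univ (0 : Fin M → Fq)
          (fun d => ∏ i, psiChar p Fq (d i * (- c i)))]
        simp [AddChar.map_zero_eq_one]
      rw [hsum] at hlim
      simpa using (tendsto_const_nhds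
        (x := ((Fintype.card Fq : ℂ) ^ M)⁻¹) (f := atTop)).mul hlim
    have hfun : (fun N : ℕ => (((Nat.card {u : Polynomial Fq //
          u.degree < (N : ℕ) ∧ ∀ i : Fin M, (a u).coeff ((i : ℤ) + 1) = c i} : ℝ)
            / (Fintype.card Fq : ℝ) ^ N : ℝ) : ℂ))
        = fun N : ℕ => ((Nat.card {u : Polynomial Fq //
          u.degree < (N : ℕ) ∧ ∀ i : Fin M, (a u).coeff ((i : ℤ) + 1) = c i} : ℂ))
            / (Fintype.card Fq : ℂ) ^ N := by
      funext N
      push_cast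
      ring
    refine Filter.tendsto_ofReal_iff.mp ?_
    rw [hfun, show ((((Fintype.card Fq : ℝ) ^ M)⁻¹ : ℝ) : ℂ)
      = ((Fintype.card Fq : ℂ) ^ M)⁻¹ by push_cast; ring]
    exact hCgoal
end

section
/- Let χ : K_∞ → ℂ be a continuous map (with respect to the X-adic valued-field topology on LaurentSeries F_q) satisfying χ(ξ+ζ) = χ(ξ)·χ(ζ) and χ(ξ) ≠ 0 for all ξ, ζ ∈ K_∞ (i.e. χ is a continuous additive character). Then there exists a unique η ∈ K_∞ such that χ(ξ) = e(η·ξ) for all ξ ∈ K_∞. -/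
open Polynomial

section Helpers

open Complex Real

lemma zpow_near_one_eq_one (z : ℂ) (hz : z ≠ 0)
    (h : ∀ n : ℤ, ‖z ^ n - 1‖ < 1) : z = 1 := by
  have habs : ‖z‖ = 1 := by
    by_contra hne
    have key : ∀ w : ℂ, 1 < ‖w‖ → ∃ n : ℕ, ¬ ‖w ^ n - 1‖ < 1 := by
      intro w hw
      obtain ⟨n, hn⟩ := pow_unbounded_of_one_lt (2 : ℝ) hw
      refine ⟨n, ?_⟩
      have h1 : ‖w ^ n‖ - ‖(1 : ℂ)‖ ≤ ‖w ^ n - 1‖ :=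
        norm_sub_norm_le _ _
      push_neg
      have : ‖w ^ n‖ = ‖w‖ ^ n := norm_pow _ _
      simp only [norm_one] at h1
      nlinarith
    rcases lt_or_gt_of_ne hne with hlt | hgt
    · have hinv : 1 < ‖z⁻¹‖ := by
        rw [norm_inv]
        exact (one_lt_inv₀ (norm_pos_iff.mpr hz)).mpr hlt
      obtain ⟨n, hn⟩ := key z⁻¹ hinv
      exact hn (by simpa [← zpow_natCast, ← zpow_neg, inv_zpow] using h (-(n:ℤ)))
    · obtain ⟨n, hn⟩ := key z hgt
      exact hn (by simpa [← zpow_natCast] using h (n : ℤ))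
  have hz1 : Complex.exp (Complex.arg z * Complex.I) = z := by
    have := Complex.norm_mul_exp_arg_mul_I z
    rwa [habs, ofReal_one, one_mul] at this
  set θ := Complex.arg z with hθdef
  have hcos : ∀ n : ℕ, 1/2 < Real.cos (n * θ) := by
    intro n
    have hn := h (n : ℤ)
    rw [zpow_natCast] at hn
    have hzn : z ^ n = Complex.exp ((n * θ : ℝ) * Complex.I) := by
      rw [← hz1, ← Complex.exp_nat_mul]; congr 1; push_cast; ring
    have hre : (z ^ n).re = Real.cos (n * θ) := by rw [hzn, Complex.exp_ofReal_mul_I_re]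
    have habs2 : ‖z ^ n‖ = 1 := by rw [norm_pow, habs, one_pow]
    have h1 : Complex.normSq (z ^ n - 1) < 1 := by
      rw [← Complex.sq_norm]
      nlinarith [norm_nonneg (z ^ n - 1)]
    have h2 : Complex.normSq (z ^ n) = 1 := by
      rw [Complex.normSq_eq_norm_sq, habs2, one_pow]
    simp only [Complex.normSq_apply, Complex.sub_re, Complex.sub_im, Complex.one_re,
      Complex.one_im] at h1 h2
    rw [← hre]; nlinarith
  have hθ0 : θ = 0 := by
    by_contra hθne
    have hφpos : 0 < |θ| := abs_pos.mpr hθne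
    have hφle : |θ| ≤ π := Complex.abs_arg_le_pi z
    have hcosφ : ∀ n : ℕ, 1/2 < Real.cos (n * |θ|) := by
      intro n
      have h' := hcos n
      rcases abs_cases θ with ⟨he, _⟩ | ⟨he, _⟩
      · rwa [he]
      · rw [he, mul_neg, Real.cos_neg]; exact h'
    have hφlt : |θ| < π / 3 := by
      by_contra hge
      push_neg at hge
      have h13 := hcosφ 1
      rw [Nat.cast_one, one_mul] at h13
      have hmono : Real.cos |θ| ≤ Real.cos (π/3) :=
        Real.cos_le_cos_of_nonneg_of_le_pi (by positivity) hφle hge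
      rw [Real.cos_pi_div_three] at hmono
      linarith
    obtain ⟨n, hn⟩ := exists_nat_ge (π / 3 / |θ|)
    have hex : ∃ n : ℕ, π/3 ≤ n * |θ| := ⟨n, (div_le_iff₀ hφpos).mp hn⟩
    classical
    set n₀ := Nat.find hex with hn₀def
    have hn₀ : π/3 ≤ n₀ * |θ| := Nat.find_spec hex
    have hn₀ne : n₀ ≠ 0 := by
      intro h0
      have h3 := hn₀
      rw [h0, Nat.cast_zero, zero_mul] at h3
      nlinarith [Real.pi_pos]
    have hprev : ¬ π/3 ≤ ((n₀ - 1 : ℕ) : ℝ) * |θ| :=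
      Nat.find_min hex (Nat.sub_lt (Nat.pos_of_ne_zero hn₀ne) one_pos)
    push_neg at hprev
    have hcast : ((n₀ : ℝ)) * |θ| = ((n₀ - 1 : ℕ) : ℝ) * |θ| + |θ| := by
      have h1 : ((n₀ : ℝ)) = ((n₀ - 1 : ℕ) : ℝ) + 1 := by
        have h2 : n₀ - 1 + 1 = n₀ := Nat.succ_pred_eq_of_pos (Nat.pos_of_ne_zero hn₀ne)
        exact_mod_cast (congrArg (fun k : ℕ => (k : ℝ)) h2).symm
      rw [h1]; ring
    have hub : (n₀ : ℝ) * |θ| < 2 * π / 3 := by rw [hcast]; linarith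
    have hmono : Real.cos (n₀ * |θ|) ≤ Real.cos (π/3) :=
      Real.cos_le_cos_of_nonneg_of_le_pi (by positivity) (by nlinarith [Real.pi_pos]) hn₀
    rw [Real.cos_pi_div_three] at hmono
    have := hcosφ n₀
    linarith
  rw [← hz1, hθ0]
  simp

variable (p : ℕ) [Fact p.Prime] (Fq : Type) [Field Fq] [Fintype Fq] [CharP Fq p]

lemma trFq_add (a b : Fq) : trFq p Fq (a + b) = trFq p Fq a + trFq p Fq b := by
  unfold trFq; exact map_add _ a b

lemma trFq_zero : trFq p Fq 0 = 0 := by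
  unfold trFq; exact map_zero _

lemma trFq_sum {ι : Type} (s : Finset ι) (f : ι → Fq) :
    trFq p Fq (∑ i ∈ s, f i) = ∑ i ∈ s, trFq p Fq (f i) := by
  classical
  induction s using Finset.induction_on with
  | empty => simp [trFq_zero]
  | insert _ _ hx ih => rename_i a s'
                        rw [Finset.sum_insert hx, Finset.sum_insert hx, trFq_add, ih]

lemma zeta_pow_mod {ζ : ℂ} (hζ : IsPrimitiveRoot ζ p) (i : ℕ) : ζ ^ i = ζ ^ (i % p) := by
  conv_lhs => rw [← Nat.div_add_mod i p]
  rw [pow_add, pow_mul, hζ.pow_eq_one, one_pow, one_mul]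

lemma zeta_val_add [NeZero p] {ζ : ℂ} (hζ : IsPrimitiveRoot ζ p) (x y : ZMod p) :
    ζ ^ (x + y).val = ζ ^ x.val * ζ ^ y.val := by
  rw [← pow_add, zeta_pow_mod p hζ (x.val + y.val), zeta_pow_mod p hζ ((x+y).val), ZMod.val_add,
    Nat.mod_mod_of_dvd _ dvd_rfl]

lemma zeta_val_sum [NeZero p] {ζ : ℂ} (hζ : IsPrimitiveRoot ζ p) {ι : Type} (s : Finset ι)
    (g : ι → ZMod p) : ζ ^ ((∑ i ∈ s, g i).val) = ∏ i ∈ s, ζ ^ ((g i).val) := by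
  classical
  induction s using Finset.induction_on with
  | empty => simp
  | insert _ _ hx ih => rename_i a s'
                        rw [Finset.sum_insert hx, Finset.prod_insert hx, zeta_val_add p hζ, ih]

/-- Every multiplicative-valued additive character of `F_q` has trace form. -/
lemma fq_char_form (ψ : Fq → ℂ) (h0 : ψ 0 = 1)
    (hψ : ∀ a b, ψ (a + b) = ψ a * ψ b) :
    ∃! c : Fq, ∀ a : Fq, ψ a =
      Complex.exp (2 * Real.pi * Complex.I / p) ^ (trFq p Fq (c * a)).val := by
  classical
  open scoped Multiplicative in
  have hp : p.Prime := Fact.out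
  haveI : NeZero p := ⟨hp.ne_zero⟩
  set ζ : ℂ := Complex.exp (2 * Real.pi * Complex.I / p) with hζdef
  have hζ : IsPrimitiveRoot ζ p := Complex.isPrimitiveRoot_exp p hp.ne_zero
  have hpow : ∀ (n : ℕ) (a : Fq), ψ (n • a) = ψ a ^ n := by
    intro n a
    induction n with
    | zero => simpa using h0
    | succ k ih => rw [succ_nsmul, hψ, ih, pow_succ]
  have hroot : ∀ a : Fq, ψ a ^ p = 1 := by
    intro a
    have h1 : (p : ℕ) • a = 0 := by
      rw [nsmul_eq_mul, CharP.cast_eq_zero Fq p, zero_mul]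
    rw [← hpow, h1, h0]
  have hex : ∀ a : Fq, ∃ i : ℕ, i < p ∧ ζ ^ i = ψ a := by
    intro a
    obtain ⟨i, hi, hii⟩ := hζ.eq_pow_of_pow_eq_one (hroot a)
    exact ⟨i, hi, hii⟩
  let k : Fq → ZMod p := fun a => ((hex a).choose : ZMod p)
  have hk : ∀ a : Fq, ζ ^ (k a).val = ψ a := by
    intro a
    obtain ⟨hlt, heq⟩ := (hex a).choose_spec
    rwa [ZMod.val_natCast_of_lt hlt]
  have hinj : ∀ x y : ZMod p, ζ ^ x.val = ζ ^ y.val → x = y := by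
    intro x y hxy
    have := hζ.pow_inj (ZMod.val_lt x) (ZMod.val_lt y) hxy
    exact ZMod.val_injective p this
  have hkadd : ∀ a b : Fq, k (a + b) = k a + k b := by
    intro a b
    apply hinj
    calc ζ ^ (k (a+b)).val = ψ (a + b) := hk _
      _ = ψ a * ψ b := hψ a b
      _ = ζ ^ ((k a).val) * ζ ^ ((k b).val) := by rw [hk a, hk b]
      _ = ζ ^ ((k a + k b).val) := (zeta_val_add p hζ _ _).symm
  letI : Algebra (ZMod p) Fq := ZMod.algebra Fq p
  have hnd := traceForm_nondegenerate (ZMod p) Fq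
  let K : Fq →+ ZMod p := AddMonoidHom.mk' k hkadd
  let Kl : Fq →ₗ[ZMod p] ZMod p := K.toZModLinearMap p
  let c : Fq := ((Algebra.traceForm (ZMod p) Fq).toDual hnd).symm Kl
  have hc : ∀ a : Fq, trFq p Fq (c * a) = k a := by
    intro a
    have := LinearMap.BilinForm.apply_toDual_symm_apply (B := Algebra.traceForm (ZMod p) Fq)
      (hB := hnd) Kl a
    rw [Algebra.traceForm_apply] at this
    exact this
  refine ⟨c, fun a => by rw [hc, hk], ?_⟩
  intro c' hc'
  have hcc : ∀ a : Fq, trFq p Fq (c' * a) = trFq p Fq (c * a) := by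
    intro a
    apply hinj
    rw [← hc' a, hc a, hk]
  have hzero : ∀ a : Fq, trFq p Fq ((c' - c) * a) = 0 := by
    intro a
    have hre : (c' - c) * a = c' * a + (-(c * a)) := by ring
    rw [hre]
    have hneg : trFq p Fq (-(c * a)) = - trFq p Fq (c * a) := by
      unfold trFq; exact map_neg _ _
    rw [trFq_add, hneg, hcc a, add_neg_cancel]
  have hsub : c' - c = 0 := by
    apply hnd.1
    intro a
    rw [Algebra.traceForm_apply]
    exact hzero a
  rwa [sub_eq_zero] at hsub

lemma hahn_sum_coeff {ι : Type} (s : Finset ι) (f : ι → HahnSeries ℤ Fq) (k : ℤ) :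
    (∑ i ∈ s, f i).coeff k = ∑ i ∈ s, (f i).coeff k :=
  map_sum (HahnSeries.coeff.addMonoidHom k) f s

end Helpers


/-- Theorem 2.2; self-duality of `K_∞`.  Every continuous additive character
`χ : K_∞ → ℂ` has the form `χ(ξ) = e(η ξ)` for a unique `η ∈ K_∞`. -/
theorem statement2 (p m : ℕ) [Fact p.Prime] (hm : m ≠ 0)
    (Fq : Type) [Field Fq] [Fintype Fq] [CharP Fq p] (hq : Fintype.card Fq = p ^ m)
    (χ : Kinf Fq → ℂ) (hcont : Continuous χ)
    (hadd : ∀ ξ ζ : Kinf Fq, χ (ξ + ζ) = χ ξ * χ ζ)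
    (hne : ∀ ξ : Kinf Fq, χ ξ ≠ 0) :
    ∃! η : Kinf Fq, ∀ ξ : Kinf Fq, χ ξ = eChar p Fq (η * ξ) := by
  classical
  open scoped Multiplicative WithZero in
  have hp : p.Prime := Fact.out
  haveI : NeZero p := ⟨hp.ne_zero⟩
  set ζ : ℂ := Complex.exp (2 * Real.pi * Complex.I / p) with hζdef
  have hζ : IsPrimitiveRoot ζ p := Complex.isPrimitiveRoot_exp p hp.ne_zero
  -- `eChar` in terms of `ζ`
  have hechar : ∀ α : Kinf Fq, eChar p Fq α = ζ ^ (trFq p Fq (α.coeff 1)).val := by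
    intro α
    rw [hζdef, ← Complex.exp_nat_mul]
    unfold eChar
    congr 1
    ring
  -- basic character identities
  have hχ0 : χ 0 = 1 := by
    have h1 := hadd 0 0
    rw [add_zero] at h1
    have h2 : χ 0 * 1 = χ 0 * χ 0 := by rw [mul_one]; exact h1
    exact (mul_left_cancel₀ (hne 0) h2).symm
  have hχsum : ∀ {ι : Type} (s : Finset ι) (f : ι → Kinf Fq),
      χ (∑ i ∈ s, f i) = ∏ i ∈ s, χ (f i) := by
    intro ι s f
    induction s using Finset.induction_on with
    | empty => simpa using hχ0
    | insert _ _ hx ih => rename_i a s'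
                          rw [Finset.sum_insert hx, Finset.prod_insert hx, hadd, ih]
  have hχneg : ∀ ξ : Kinf Fq, χ (-ξ) = (χ ξ)⁻¹ := by
    intro ξ
    have h1 : χ (-ξ) * χ ξ = 1 := by rw [← hadd, neg_add_cancel, hχ0]
    exact eq_inv_of_mul_eq_one_left h1
  have hχnpow : ∀ (n : ℕ) (ξ : Kinf Fq), χ (n • ξ) = χ ξ ^ n := by
    intro n ξ
    induction n with
    | zero => simpa using hχ0
    | succ k ih => rw [succ_nsmul, hadd, ih, pow_succ]
  have hχzpow : ∀ (n : ℤ) (ξ : Kinf Fq), χ (n • ξ) = χ ξ ^ n := by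
    intro n ξ
    cases n with
    | ofNat k => rw [Int.ofNat_eq_coe, natCast_zsmul, hχnpow, zpow_natCast]
    | negSucc k =>
        rw [negSucc_zsmul, hχneg, hχnpow, zpow_negSucc]
  -- triviality on a ball
  obtain ⟨N, hball⟩ : ∃ N : ℤ, ∀ ξ : Kinf Fq, (∀ n : ℤ, n < N → ξ.coeff n = 0) → χ ξ = 1 := by
    have hU : χ ⁻¹' Metric.ball (1 : ℂ) 1 ∈ nhds (0 : Kinf Fq) := by
      apply hcont.continuousAt.preimage_mem_nhds
      rw [hχ0]
      exact Metric.ball_mem_nhds 1 one_pos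
    rw [Valued.mem_nhds] at hU
    obtain ⟨γ', hγ⟩ := hU
    obtain ⟨γ, hγe⟩ : ∃ γ : ℤᵐ⁰ˣ, (γ : ℤᵐ⁰) = MonoidWithZeroHom.ValueGroup₀.embedding γ'.1 :=
      ⟨Units.mk0 _ ((map_ne_zero_iff _ MonoidWithZeroHom.ValueGroup₀.embedding_injective).mpr
        γ'.ne_zero), rfl⟩
    obtain ⟨d, hd⟩ : ∃ d : Multiplicative ℤ, (d : ℤᵐ⁰) = (γ : ℤᵐ⁰) :=
      ⟨WithZero.unzero γ.ne_zero, WithZero.coe_unzero _⟩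
    refine ⟨1 - Multiplicative.toAdd d, fun ξ hξ => ?_⟩
    have hmem : ∀ n : ℤ, ‖χ ξ ^ n - 1‖ < 1 := by
      intro n
      have hcoeff : ∀ k : ℤ, k < 1 - Multiplicative.toAdd d → (n • ξ).coeff k = 0 := by
        intro k hk
        have h3 : (n • ξ).coeff k = n • (ξ.coeff k) :=
          map_zsmul (HahnSeries.coeff.addMonoidHom k) n ξ
        rw [h3, hξ k hk, smul_zero]
      have hval : Valued.v (n • ξ) ≤
          ((Multiplicative.ofAdd (-(1 - Multiplicative.toAdd d)) : Multiplicative ℤ) : ℤᵐ⁰) :=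
        (LaurentSeries.valuation_le_iff_coeff_lt_eq_zero Fq).mpr hcoeff
      have hlt : ((Multiplicative.ofAdd (-(1 - Multiplicative.toAdd d)) :
          Multiplicative ℤ) : ℤᵐ⁰) < (γ : ℤᵐ⁰) := by
        rw [← hd, WithZero.coe_lt_coe, ← Multiplicative.toAdd_lt]
        simp
      have hmem2 : n • ξ ∈ {y : Kinf Fq | Valued.v.restrict (y - 0) < γ'.1} := by
        simp only [Set.mem_setOf_eq, sub_zero]
        rw [Valuation.restrict_lt_iff_lt_embedding, ← hγe]
        exact lt_of_le_of_lt hval hlt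
      have hb := hγ hmem2
      rw [← hχzpow n ξ]
      simpa [Metric.mem_ball, Complex.dist_eq] using hb
    exact zpow_near_one_eq_one (χ ξ) (hne ξ) hmem
  -- the coefficients of η
  have hkey : ∀ k : ℤ, ∃! c : Fq, ∀ a : Fq,
      χ (HahnSeries.single (1 - k) a) = ζ ^ (trFq p Fq (c * a)).val := by
    intro k
    refine fq_char_form p Fq _ ?_ ?_
    · rw [show (HahnSeries.single (1-k) (0:Fq) : Kinf Fq) = 0 from HahnSeries.single_eq_zero]
      exact hχ0
    · intro a b
      rw [← hadd]
      congr 1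
      exact map_add (HahnSeries.single.addMonoidHom (1-k)) a b
  choose c hc1 hc2 using hkey
  have hc0 : ∀ k : ℤ, k ≤ 1 - N → c k = 0 := by
    intro k hk
    refine ((hc2 k) 0 (fun a => ?_)).symm
    rw [zero_mul, trFq_zero, ZMod.val_zero, pow_zero]
    apply hball
    intro n hn
    apply HahnSeries.coeff_single_of_ne
    omega
  have hsupp : (Function.support c).IsPWO := by
    have hbdd : BddBelow (Function.support c) := by
      refine ⟨2 - N, fun x hx => ?_⟩
      by_contra hlt
      exact hx (hc0 x (by omega))
    exact Set.IsWF.isPWO hbdd.wellFoundedOn_lt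
  set η : Kinf Fq := ⟨c, hsupp⟩ with hηdef
  have hηcoeff : ∀ k : ℤ, η.coeff k = c k := fun _ => rfl
  -- main identity
  have hmain : ∀ ξ : Kinf Fq, χ ξ = eChar p Fq (η * ξ) := by
    intro ξ
    set o : ℤ := min ξ.order N with hodef
    set trunc : Kinf Fq := ∑ n ∈ Finset.Ico o N, (HahnSeries.single n (ξ.coeff n) : Kinf Fq)
      with htruncdef
    have htrunccoeff : ∀ k : ℤ, trunc.coeff k =
        if k ∈ Finset.Ico o N then ξ.coeff k else 0 := by
      intro k
      rw [htruncdef, hahn_sum_coeff]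
      by_cases hmem : k ∈ Finset.Ico o N
      · rw [if_pos hmem]
        exact (Finset.sum_eq_single_of_mem k hmem
          (fun n _ hnk => HahnSeries.coeff_single_of_ne hnk.symm)).trans
          (HahnSeries.coeff_single_same k (ξ.coeff k))
      · rw [if_neg hmem]
        exact Finset.sum_eq_zero
          (fun n hn => HahnSeries.coeff_single_of_ne (fun hh : k = n => hmem (hh ▸ hn)))
    set T : Kinf Fq := ξ - trunc with hTdef
    have hT : ∀ n : ℤ, n < N → T.coeff n = 0 := by
      intro n hn
      rw [hTdef, HahnSeries.coeff_sub, htrunccoeff]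
      by_cases hmem : n ∈ Finset.Ico o N
      · simp [hmem]
      · have hno : n < o := by
          simp only [Finset.mem_Ico, not_and, not_lt] at hmem
          by_contra hh
          push_neg at hh
          exact absurd (hmem hh) (not_le.mpr hn)
        have : ξ.coeff n = 0 := HahnSeries.coeff_eq_zero_of_lt_order
          (lt_of_lt_of_le hno (min_le_left _ _))
        simp [hmem, this]
    have hdecomp : ξ = trunc + T := by rw [hTdef]; ring
    -- LHS
    have hLHS : χ ξ = ∏ n ∈ Finset.Ico o N, χ (HahnSeries.single n (ξ.coeff n)) := by
      conv_lhs => rw [hdecomp]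
      rw [hadd, hball T hT, mul_one, htruncdef, hχsum]
    -- RHS
    have hηT : (η * T).coeff 1 = 0 := by
      by_contra hne0
      have h1 : (1:ℤ) ∈ (η * T).support := hne0
      have h2 := HahnSeries.support_mul_subset h1
      obtain ⟨u, hu, v, hv, huv⟩ := Set.mem_add.mp h2
      have hu2 : 2 - N ≤ u := by
        by_contra hno
        exact hu (hc0 u (by omega))
      have hv2 : N ≤ v := by
        by_contra hno
        exact hv (hT v (by omega))
      omega
    have hηtrunc : (η * trunc).coeff 1 =
        ∑ n ∈ Finset.Ico o N, η.coeff (1 - n) * ξ.coeff n := by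
      rw [htruncdef, Finset.mul_sum, hahn_sum_coeff]
      refine Finset.sum_congr rfl (fun n _ => ?_)
      have h2 : (η * HahnSeries.single n (ξ.coeff n)).coeff ((1 - n) + n)
          = η.coeff (1 - n) * ξ.coeff n := HahnSeries.coeff_mul_single_add
      have h3 : (1 - n) + n = (1 : ℤ) := by ring
      rw [h3] at h2
      rw [h2]
    have hcoeff1 : (η * ξ).coeff 1 = ∑ n ∈ Finset.Ico o N, η.coeff (1 - n) * ξ.coeff n := by
      conv_lhs => rw [hdecomp]
      rw [mul_add, HahnSeries.coeff_add, hηT, add_zero, hηtrunc]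
    rw [hechar, hcoeff1, trFq_sum, zeta_val_sum p hζ, hLHS]
    refine Finset.prod_congr rfl (fun n _ => ?_)
    have h5 := hc1 (1 - n) (ξ.coeff n)
    rw [sub_sub_cancel] at h5
    rw [h5, hηcoeff]
  refine ⟨η, hmain, fun y hy => ?_⟩
  ext k
  refine (hc2 k) (y.coeff k) (fun a => ?_)
  rw [hy (HahnSeries.single (1 - k) a), hechar]
  have h2 : (y * HahnSeries.single (1 - k) a).coeff (k + (1 - k)) = y.coeff k * a :=
    HahnSeries.coeff_mul_single_add
  have h3 : k + (1 - k) = (1 : ℤ) := by ring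
  rw [h3] at h2
  rw [h2]
end

section
/- For all α, ξ ∈ K_∞, one has e(α·ξ^p) = e(ψ(α)·ξ). -/
open Polynomial

section AuxStatement3

lemma trace_frob_aux (p : ℕ) [Fact p.Prime] (Fq : Type) [Field Fq] [Fintype Fq] [CharP Fq p]
    (x : Fq) :
    letI := ZMod.algebra Fq p
    Algebra.trace (ZMod p) Fq (x ^ p) = Algebra.trace (ZMod p) Fq x := by
  letI := ZMod.algebra Fq p
  apply (algebraMap (ZMod p) Fq).injective
  let F : Fq ≃ₐ[ZMod p] Fq :=
    { frobeniusEquiv Fq p with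
      commutes' := fun r => by
        exact congrFun (congrArg (fun f : ZMod p →+* Fq => (f : ZMod p → Fq))
          (Subsingleton.elim ((frobeniusEquiv Fq p : Fq →+* Fq).comp (algebraMap (ZMod p) Fq))
            (algebraMap (ZMod p) Fq))) r }
  rw [trace_eq_sum_automorphisms, trace_eq_sum_automorphisms]
  have : ∀ σ : Fq ≃ₐ[ZMod p] Fq, σ (x ^ p) = (σ * F) x := by
    intro σ
    show σ (x ^ p) = σ (F x)
    congr 1
  rw [Finset.sum_congr rfl (fun σ _ => this σ)]
  exact Fintype.sum_equiv (Equiv.mulRight F) _ _ (fun σ => rfl)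

lemma coeff_finsum_aux (Fq : Type) [Field Fq] (s : Finset ℤ) (f : ℤ → Kinf Fq) (n : ℤ) :
    (∑ i ∈ s, f i).coeff n = ∑ i ∈ s, (f i).coeff n := by
  classical
  induction s using Finset.cons_induction with
  | empty => simp
  | cons a s ha ih =>
    rw [Finset.sum_cons, Finset.sum_cons, HahnSeries.coeff_add, ih]

lemma pow_char_coeff (p : ℕ) [Fact p.Prime] (Fq : Type) [Field Fq] [CharP Fq p]
    (ξ : Kinf Fq) (j : ℤ) :
    (ξ ^ p).coeff j = if (p : ℤ) ∣ j then (ξ.coeff (j / (p : ℤ))) ^ p else 0 := by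
  classical
  haveI : CharP (Kinf Fq) p := charP_of_injective_ringHom HahnSeries.C_injective p
  have hp : p.Prime := Fact.out
  have hp0 : (p : ℤ) ≠ 0 := by exact_mod_cast hp.ne_zero
  have hp1 : (1 : ℤ) ≤ (p : ℤ) := by exact_mod_cast hp.one_le
  rcases eq_or_ne ξ 0 with rfl | hξ
  · simp [zero_pow hp.ne_zero, zero_pow, hp.ne_zero]
  set B : ℤ := max j 0 with hB
  have hB0 : 0 ≤ B := le_max_right _ _
  have hjB : j ≤ B := le_max_left _ _
  have hfin : (ξ.support ∩ Set.Icc ξ.order B).Finite :=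
    (Set.finite_Icc ξ.order B).subset Set.inter_subset_right
  set s : Finset ℤ := hfin.toFinset with hs
  have hmem : ∀ i : ℤ, i ∈ s ↔ ξ.coeff i ≠ 0 ∧ ξ.order ≤ i ∧ i ≤ B := by
    intro i; simp [hs, Set.Finite.mem_toFinset, HahnSeries.mem_support, Set.mem_Icc, and_assoc]
  set u : Kinf Fq := ∑ i ∈ s, HahnSeries.single i (ξ.coeff i) with hu
  have hucoeff : ∀ n : ℤ, u.coeff n = if n ∈ s then ξ.coeff n else 0 := by
    intro n
    rw [hu, coeff_finsum_aux]
    rw [Finset.sum_congr rfl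
      (fun i _ => HahnSeries.coeff_single (a := i) (b := n) (r := ξ.coeff i))]
    rw [show (fun i => @ite Fq (n = i) (Classical.propDecidable (n = i)) (ξ.coeff i) 0)
        = (fun i => if n = i then ξ.coeff i else 0) from funext fun i => by convert rfl]
    exact Finset.sum_ite_eq s n (fun i => ξ.coeff i)
  set v : Kinf Fq := ξ - u with hv
  have hvcoeff : ∀ n : ℤ, n ≤ B → v.coeff n = 0 := by
    intro n hn
    rw [hv, HahnSeries.coeff_sub, hucoeff]
    by_cases h : n ∈ s
    · simp [h]
    · simp only [h, if_false, sub_zero]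
      rw [hmem] at h
      push_neg at h
      by_contra hne
      exact absurd (h hne ((HahnSeries.order_le_of_coeff_ne_zero hne))) (not_lt.mpr hn)
  have hvsupp : ∀ n : ℕ, 1 ≤ n → ∀ i ∈ (v ^ n).support, B < i := by
    intro n hn
    induction n with
    | zero => omega
    | succ k ih =>
      rcases Nat.eq_or_lt_of_le hn with h1 | h1
      · intro i hi
        rw [show k + 1 = 1 from h1.symm, pow_one] at hi
        by_contra hle
        exact hi (hvcoeff i (not_lt.mp hle))
      · intro i hi
        rw [pow_succ] at hi
        obtain ⟨a, ha, b, hb, rfl⟩ := Set.mem_add.mp (HahnSeries.support_mul_subset hi)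
        have hka : B < a := ih (by omega) a ha
        have hkb : B < b := by
          by_contra hle
          exact (HahnSeries.mem_support _ _).mp hb (hvcoeff b (not_lt.mp hle))
        omega
  have hvp : (v ^ p).coeff j = 0 := by
    by_contra hne
    exact absurd (hvsupp p hp.one_le j ((HahnSeries.mem_support _ _).mpr hne)) (not_lt.mpr hjB)
  have hup : u ^ p = ∑ i ∈ s, HahnSeries.single ((p : ℤ) * i) ((ξ.coeff i) ^ p) := by
    rw [hu, sum_pow_char]
    refine Finset.sum_congr rfl (fun i _ => ?_)
    rw [HahnSeries.single_pow, nsmul_eq_mul]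
  have hxi : ξ = u + v := by rw [hv]; ring
  have hmain : (ξ ^ p).coeff j = (u ^ p).coeff j := by
    rw [hxi, add_pow_char, HahnSeries.coeff_add, hvp, add_zero]
  rw [hmain, hup, coeff_finsum_aux]
  by_cases hd : (p : ℤ) ∣ j
  · obtain ⟨k, rfl⟩ := hd
    have hk : (p : ℤ) * k / (p : ℤ) = k := Int.mul_ediv_cancel_left k hp0
    rw [if_pos ⟨k, rfl⟩, hk]
    have hcongr : ∀ i ∈ s, (HahnSeries.single ((p : ℤ) * i) ((ξ.coeff i) ^ p)).coeff ((p : ℤ) * k)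
        = if i = k then (ξ.coeff i) ^ p else 0 := by
      intro i _
      rw [HahnSeries.coeff_single]
      congr 1
      simp only [eq_iff_iff]
      constructor
      · intro h; exact (mul_left_cancel₀ hp0 h).symm
      · rintro rfl; rfl
    rw [Finset.sum_congr rfl hcongr, Finset.sum_ite_eq' s k (fun i => (ξ.coeff i) ^ p)]
    by_cases hks : k ∈ s
    · rw [if_pos hks]
    · rw [if_neg hks]
      have hkB : k ≤ B := by
        rcases le_or_gt k 0 with h | h
        · omega
        · have : k ≤ (p : ℤ) * k := le_mul_of_one_le_left (le_of_lt h) hp1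
          omega
      have : ξ.coeff k = 0 := by
        by_contra hne
        exact hks ((hmem k).mpr ⟨hne, HahnSeries.order_le_of_coeff_ne_zero hne, hkB⟩)
      rw [this, zero_pow hp.ne_zero]
  · rw [if_neg hd]
    refine Finset.sum_eq_zero (fun i _ => ?_)
    rw [HahnSeries.coeff_single, if_neg]
    rintro rfl
    exact hd ⟨i, rfl⟩

end AuxStatement3

/-- Lemma 2.3.  For all `α, ξ ∈ K_∞` one has `e(α ξ^p) = e(ψ(α) ξ)`. -/
theorem statement3 (p m : ℕ) [Fact p.Prime] (hm : m ≠ 0)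
    (Fq : Type) [Field Fq] [Fintype Fq] [CharP Fq p] (hq : Fintype.card Fq = p ^ m)
    (α ξ : Kinf Fq) :
    eChar p Fq (α * ξ ^ p) = eChar p Fq (psiK p m Fq α * ξ) := by
  classical
  letI := ZMod.algebra Fq p
  have hp : p.Prime := Fact.out
  have hp0 : (p : ℤ) ≠ 0 := by exact_mod_cast hp.ne_zero
  have key : trFq p Fq ((α * ξ ^ p).coeff 1) = trFq p Fq ((psiK p m Fq α * ξ).coeff 1) := by
    have hpsi : ∀ n : ℤ, (psiK p m Fq α).coeff n
        = (α.coeff ((p : ℤ) * n - ((p : ℤ) - 1))) ^ (p ^ (m - 1)) := fun n => rfl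
    show Algebra.trace (ZMod p) Fq ((α * ξ ^ p).coeff 1)
        = Algebra.trace (ZMod p) Fq ((psiK p m Fq α * ξ).coeff 1)
    rw [HahnSeries.coeff_mul, HahnSeries.coeff_mul, map_sum, map_sum]
    refine Finset.sum_nbij' (fun ij => ((1 : ℤ) - ij.2 / (p : ℤ), ij.2 / (p : ℤ)))
      (fun ij => ((1 : ℤ) - (p : ℤ) * ij.2, (p : ℤ) * ij.2)) ?_ ?_ ?_ ?_ ?_
    · rintro ⟨i, j⟩ hij
      rw [Finset.mem_addAntidiagonal] at hij ⊢
      obtain ⟨hi, hj, hsum⟩ := hij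
      rw [HahnSeries.mem_support, pow_char_coeff] at hj
      have hd : (p : ℤ) ∣ j := by
        by_contra h; rw [if_neg h] at hj; exact hj rfl
      rw [if_pos hd] at hj
      refine ⟨?_, ?_, by dsimp only; ring⟩
      · rw [HahnSeries.mem_support]
        dsimp only
        rw [hpsi]
        have : (p : ℤ) * (1 - j / (p : ℤ)) - ((p : ℤ) - 1) = 1 - j := by
          obtain ⟨k, rfl⟩ := hd
          rw [Int.mul_ediv_cancel_left k hp0]; ring
        rw [this, show (1 : ℤ) - j = i by omega]
        exact pow_ne_zero _ (by simpa [HahnSeries.mem_support] using hi)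
      · rw [HahnSeries.mem_support]
        intro h0
        rw [h0, zero_pow hp.ne_zero] at hj
        exact hj rfl
    · rintro ⟨i, j⟩ hij
      rw [Finset.mem_addAntidiagonal] at hij ⊢
      obtain ⟨hi, hj, hsum⟩ := hij
      rw [HahnSeries.mem_support, hpsi] at hi
      refine ⟨?_, ?_, by dsimp only; ring⟩
      · rw [HahnSeries.mem_support]
        dsimp only
        have : (1 : ℤ) - (p : ℤ) * j = (p : ℤ) * i - ((p : ℤ) - 1) := by
          rw [show i = 1 - j by omega]; ring
        rw [this]
        intro h0
        rw [h0, zero_pow (pow_ne_zero _ hp.ne_zero)] at hi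
        exact hi rfl
      · rw [HahnSeries.mem_support, pow_char_coeff, if_pos ⟨j, rfl⟩,
          Int.mul_ediv_cancel_left j hp0]
        exact pow_ne_zero _ (by simpa [HahnSeries.mem_support] using hj)
    · rintro ⟨i, j⟩ hij
      rw [Finset.mem_addAntidiagonal] at hij
      obtain ⟨hi, hj, hsum⟩ := hij
      rw [HahnSeries.mem_support, pow_char_coeff] at hj
      have hd : (p : ℤ) ∣ j := by
        by_contra h; rw [if_neg h] at hj; exact hj rfl
      obtain ⟨k, rfl⟩ := hd
      dsimp only at hsum ⊢
      rw [Int.mul_ediv_cancel_left k hp0, show (1 : ℤ) - (p : ℤ) * k = i by omega]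
    · rintro ⟨i, j⟩ hij
      rw [Finset.mem_addAntidiagonal] at hij
      dsimp only
      rw [Int.mul_ediv_cancel_left j hp0, show (1 : ℤ) - j = i by omega]
    · rintro ⟨i, j⟩ hij
      rw [Finset.mem_addAntidiagonal] at hij
      obtain ⟨hi, hj, hsum⟩ := hij
      rw [HahnSeries.mem_support, pow_char_coeff] at hj
      have hd : (p : ℤ) ∣ j := by
        by_contra h; rw [if_neg h] at hj; exact hj rfl
      obtain ⟨k, rfl⟩ := hd
      have hk : (p : ℤ) * k / (p : ℤ) = k := Int.mul_ediv_cancel_left k hp0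
      simp only [hk]
      rw [pow_char_coeff, if_pos ⟨k, rfl⟩, hk, hpsi]
      have h1 : (p : ℤ) * (1 - k) - ((p : ℤ) - 1) = 1 - (p : ℤ) * k := by ring
      rw [h1, show (1 : ℤ) - (p : ℤ) * k = i by omega]
      set y : Fq := α.coeff i ^ (p ^ (m - 1)) * ξ.coeff k with hy
      have hyp : y ^ p = α.coeff i * ξ.coeff k ^ p := by
        rw [hy, mul_pow, ← pow_mul, ← pow_succ, show m - 1 + 1 = m by omega,
          ← hq, FiniteField.pow_card]
      rw [← hyp]
      exact trace_frob_aux p Fq y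
  unfold eChar
  rw [key]
end

section
/- Let k be a positive integer. If α, β ∈ K_∞ satisfy ψ(α) + β ∈ F_q[t], then e(α·u^{kp} + β·u^k) = 1 for every u ∈ F_q[t]. Consequently, there exist irrational elements α, β ∈ K_∞ such that the family (α·u^{kp} + β·u^k)_{u ∈ F_q[t]} is not equidistributed in 𝕋. -/
open Polynomial

noncomputable section AuxStatement4

/-- coefficient of a finite sum of Hahn series -/
theorem aux_coeff_sum {Fq : Type} [Field Fq] {ι : Type} (s : Finset ι)
    (f : ι → Kinf Fq) (z : ℤ) :
    (∑ i ∈ s, f i).coeff z = ∑ i ∈ s, (f i).coeff z :=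
  map_sum (HahnSeries.coeff.addMonoidHom z) f s

theorem aux_polyToK_eq_sum (Fq : Type) [Field Fq] {v : Polynomial Fq} {n : ℕ}
    (hn : v.natDegree < n) :
    polyToK Fq v = ∑ j ∈ Finset.range n, HahnSeries.single (-(j : ℤ)) (v.coeff j) := by
  show Polynomial.eval₂ (HahnSeries.C : Fq →+* Kinf Fq) (HahnSeries.single (-1 : ℤ) 1) v = _
  rw [Polynomial.eval₂_eq_sum_range' _ hn]
  refine Finset.sum_congr rfl fun j _ => ?_
  rw [HahnSeries.single_pow, HahnSeries.C_apply, HahnSeries.single_mul_single]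
  simp [nsmul_eq_mul]

theorem aux_mul_single_coeff {Fq : Type} [Field Fq] (α : Kinf Fq) (b : ℤ) (r : Fq) (n : ℤ) :
    (α * HahnSeries.single b r).coeff n = α.coeff (n - b) * r := by
  have h := HahnSeries.coeff_mul_single_add (r := r) (x := α) (a := n - b) (b := b)
  rwa [sub_add_cancel] at h

theorem aux_mul_polyToK_coeff {Fq : Type} [Field Fq] (α : Kinf Fq) (v : Polynomial Fq)
    {n : ℕ} (hn : v.natDegree < n) (z : ℤ) :
    (α * polyToK Fq v).coeff z =
      ∑ j ∈ Finset.range n, α.coeff (z + j) * v.coeff j := by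
  rw [aux_polyToK_eq_sum Fq hn, Finset.mul_sum, aux_coeff_sum]
  refine Finset.sum_congr rfl fun j _ => ?_
  rw [aux_mul_single_coeff, sub_neg_eq_add]

theorem aux_polyToK_coeff_pos {Fq : Type} [Field Fq] (v : Polynomial Fq) {z : ℤ}
    (hz : 0 < z) : (polyToK Fq v).coeff z = 0 := by
  rw [aux_polyToK_eq_sum Fq (Nat.lt_succ_self v.natDegree), aux_coeff_sum]
  refine Finset.sum_eq_zero fun j _ => ?_
  exact HahnSeries.coeff_single_of_ne (by omega)

theorem aux_keyA (p m : ℕ) [Fact p.Prime] (hm : m ≠ 0) (Fq : Type) [Field Fq] [Fintype Fq]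
    [CharP Fq p] (hq : Fintype.card Fq = p ^ m) (α : Kinf Fq) (v : Polynomial Fq) :
    (α * polyToK Fq (v ^ p)).coeff 1 =
      ((psiK p m Fq α * polyToK Fq v).coeff 1) ^ p := by
  have hp : 0 < p := (Fact.out : p.Prime).pos
  haveI : ExpChar Fq p := ExpChar.prime Fact.out
  set n := v.natDegree + 1 with hn
  have hvn : v.natDegree < n := Nat.lt_succ_self _
  have hvpn : (v ^ p).natDegree < p * n :=
    lt_of_le_of_lt Polynomial.natDegree_pow_le ((mul_lt_mul_iff_right₀ hp).mpr hvn)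
  have hcoeff : ∀ j : ℕ, (v ^ p).coeff j =
      if p ∣ j then (v.coeff (j / p)) ^ p else 0 := by
    intro j
    rw [← Polynomial.map_frobenius_expand, Polynomial.coeff_map, Polynomial.coeff_expand hp]
    simp only [frobenius_def]
    split_ifs <;> simp [zero_pow hp.ne']
  rw [aux_mul_polyToK_coeff α (v ^ p) hvpn 1, aux_mul_polyToK_coeff (psiK p m Fq α) v hvn 1,
    sum_pow_char]
  have hsub : (Finset.range n).image (fun i => p * i) ⊆ Finset.range (p * n) := by
    intro j hj
    simp only [Finset.mem_image, Finset.mem_range] at hj ⊢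
    obtain ⟨i, hi, rfl⟩ := hj
    exact (mul_lt_mul_iff_right₀ hp).mpr hi
  have hzero : ∀ j ∈ Finset.range (p * n),
      j ∉ (Finset.range n).image (fun i => p * i) →
      α.coeff (1 + j) * (v ^ p).coeff j = 0 := by
    intro j hj hj'
    have hnd : ¬ p ∣ j := by
      rintro ⟨i, rfl⟩
      simp only [Finset.mem_range] at hj
      exact hj' (Finset.mem_image.mpr ⟨i, Finset.mem_range.mpr
        (lt_of_mul_lt_mul_left hj (Nat.zero_le p)), rfl⟩)
    rw [hcoeff, if_neg hnd, mul_zero]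
  rw [← Finset.sum_subset hsub hzero,
    Finset.sum_image (fun a _ b _ h => Nat.eq_of_mul_eq_mul_left hp h)]
  refine Finset.sum_congr rfl fun i hi => ?_
  rw [hcoeff, if_pos (dvd_mul_right p i), Nat.mul_div_cancel_left i hp]
  have hpsi : (psiK p m Fq α).coeff (1 + (i : ℤ)) =
      (α.coeff ((p : ℤ) * (1 + i) - ((p : ℤ) - 1))) ^ (p ^ (m - 1)) := rfl
  rw [hpsi, mul_pow, ← pow_mul]
  have hpm : p ^ (m - 1) * p = p ^ m := by
    conv_rhs => rw [show m = (m - 1) + 1 by omega]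
    rw [pow_succ]
  rw [hpm, ← hq, FiniteField.pow_card]
  congr 2
  push_cast
  ring

theorem aux_trFq_sub (p : ℕ) (Fq : Type) [Field Fq] [CharP Fq p] (a b : Fq) :
    trFq p Fq (a - b) = trFq p Fq a - trFq p Fq b := by
  unfold trFq
  exact map_sub _ a b

theorem aux_trFq_frob (p : ℕ) [Fact p.Prime] (Fq : Type) [Field Fq] [Fintype Fq]
    [CharP Fq p] (x : Fq) : trFq p Fq (x ^ p) = trFq p Fq x := by
  letI := ZMod.algebra Fq p
  haveI : ExpChar Fq p := ExpChar.prime Fact.out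
  let e : Fq ≃ₐ[ZMod p] Fq := AlgEquiv.ofRingEquiv (f := frobeniusEquiv Fq p)
    (fun a => by
      rw [frobeniusEquiv_def, ← map_pow, ZMod.pow_card])
  show (Algebra.trace (ZMod p) Fq) (x ^ p) = (Algebra.trace (ZMod p) Fq) x
  rw [show x ^ p = e x from rfl]
  exact Algebra.trace_eq_of_algEquiv e x

theorem aux_tr_coeff_eq_zero (p m : ℕ) [Fact p.Prime] (hm : m ≠ 0) (Fq : Type) [Field Fq]
    [Fintype Fq] [CharP Fq p] (hq : Fintype.card Fq = p ^ m)
    (α β : Kinf Fq) (hab : psiK p m Fq α + β ∈ Set.range (polyToK Fq))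
    (k : ℕ) (u : Polynomial Fq) :
    trFq p Fq ((α * polyToK Fq u ^ (k * p) + β * polyToK Fq u ^ k).coeff 1) = 0 := by
  obtain ⟨w, hw⟩ := hab
  have hβ : β = polyToK Fq w - psiK p m Fq α := by rw [hw]; ring
  have h1 : polyToK Fq u ^ (k * p) = polyToK Fq ((u ^ k) ^ p) := by
    rw [map_pow, map_pow, ← pow_mul]
  have h2 : polyToK Fq u ^ k = polyToK Fq (u ^ k) := (map_pow _ _ _).symm
  have hco : (α * polyToK Fq u ^ (k * p) + β * polyToK Fq u ^ k).coeff 1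
      = ((psiK p m Fq α * polyToK Fq (u ^ k)).coeff 1) ^ p
        - (psiK p m Fq α * polyToK Fq (u ^ k)).coeff 1 := by
    rw [hβ, h1, h2, sub_mul, ← map_mul, HahnSeries.coeff_add, HahnSeries.coeff_sub,
      aux_keyA p m hm Fq hq α (u ^ k), aux_polyToK_coeff_pos (w * u ^ k) one_pos]
    ring
  rw [hco, aux_trFq_sub, aux_trFq_frob, sub_self]

theorem aux_eChar_eq_one (p : ℕ) [Fact p.Prime] (Fq : Type) [Field Fq] [CharP Fq p]
    (α : Kinf Fq) (h : trFq p Fq (α.coeff 1) = 0) : eChar p Fq α = 1 := by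
  haveI : NeZero p := ⟨(Fact.out : p.Prime).ne_zero⟩
  unfold eChar
  rw [h, ZMod.val_zero]
  simp

theorem aux_exists_tr_ne (p : ℕ) [Fact p.Prime] (Fq : Type) [Field Fq] [Fintype Fq]
    [CharP Fq p] : ∃ c : Fq, trFq p Fq c ≠ 0 := by
  have hp : p = ringChar Fq := (ringChar.eq Fq p).symm
  subst hp
  letI := ZMod.algebra Fq (ringChar Fq)
  obtain ⟨b, hb⟩ := FiniteField.trace_to_zmod_nondegenerate Fq (one_ne_zero (α := Fq))
  rw [one_mul] at hb
  exact ⟨b, by unfold trFq; exact hb⟩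

/-- A right inverse to `ψ` at the level of coefficients. -/
def auxPhi (p : ℕ) [Fact p.Prime] (Fq : Type) [Field Fq] (β : Kinf Fq) : Kinf Fq where
  coeff := fun j => if (p : ℤ) ∣ (j + p - 1) then (β.coeff ((j + p - 1) / p)) ^ p else 0
  isPWO_support' := by
    have hp : (0 : ℤ) < (p : ℤ) := by exact_mod_cast (Fact.out : p.Prime).pos
    have hsub : (Function.support fun j : ℤ =>
        if (p : ℤ) ∣ (j + p - 1) then (β.coeff ((j + p - 1) / p)) ^ p else 0) ⊆
        (fun n : ℤ => (p : ℤ) * n - ((p : ℤ) - 1)) '' β.support := by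
      intro j hj
      simp only [Function.mem_support] at hj
      by_cases hd : (p : ℤ) ∣ (j + p - 1)
      · rw [if_pos hd] at hj
        refine ⟨(j + p - 1) / p, ?_, ?_⟩
        · intro h0
          apply hj
          rw [h0]
          exact zero_pow (Fact.out : p.Prime).ne_zero
        · show (p : ℤ) * ((j + p - 1) / p) - ((p : ℤ) - 1) = j
          rw [Int.mul_ediv_cancel' hd]; ring
      · exact absurd (if_neg hd) hj
    exact ((β.isPWO_support).image_of_monotone
      (fun a b hab => by
        have := mul_le_mul_of_nonneg_left hab hp.le
        simpa using sub_le_sub_right this ((p : ℤ) - 1))).mono hsub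

theorem aux_psiK_phi (p m : ℕ) [Fact p.Prime] (hm : m ≠ 0) (Fq : Type) [Field Fq]
    [Fintype Fq] [CharP Fq p] (hq : Fintype.card Fq = p ^ m) (β : Kinf Fq) :
    psiK p m Fq (auxPhi p Fq β) = β := by
  have hp : (p : ℤ) ≠ 0 := by exact_mod_cast (Fact.out : p.Prime).ne_zero
  ext z
  show ((auxPhi p Fq β).coeff ((p : ℤ) * z - ((p : ℤ) - 1))) ^ p ^ (m - 1) = β.coeff z
  have h1 : (auxPhi p Fq β).coeff ((p : ℤ) * z - ((p : ℤ) - 1)) = (β.coeff z) ^ p := by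
    show (if (p : ℤ) ∣ (((p : ℤ) * z - ((p : ℤ) - 1)) + p - 1) then
        (β.coeff ((((p : ℤ) * z - ((p : ℤ) - 1)) + p - 1) / p)) ^ p else 0) = _
    rw [show ((p : ℤ) * z - ((p : ℤ) - 1)) + p - 1 = (p : ℤ) * z by ring,
      if_pos (dvd_mul_right _ _), Int.mul_ediv_cancel_left z hp]
  rw [h1, ← pow_mul]
  have hpm : p * p ^ (m - 1) = p ^ m := by
    conv_rhs => rw [show m = 1 + (m - 1) by omega]
    rw [pow_add, pow_one]
  rw [hpm, ← hq, FiniteField.pow_card]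

theorem aux_phi_inj (p m : ℕ) [Fact p.Prime] (hm : m ≠ 0) (Fq : Type) [Field Fq]
    [Fintype Fq] [CharP Fq p] (hq : Fintype.card Fq = p ^ m) :
    Function.Injective (auxPhi p Fq) := fun a b h => by
  have ha := aux_psiK_phi p m hm Fq hq a
  have hb := aux_psiK_phi p m hm Fq hq b
  rw [← ha, ← hb, h]

theorem aux_irr_neg (Fq : Type) [Field Fq] {β : Kinf Fq} (h : IrrationalK Fq β) :
    IrrationalK Fq (-β) := by
  rintro ⟨g, d, hd, heq⟩
  refine h ⟨-g, d, hd, ?_⟩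
  have hβ2 : β = -(polyToK Fq g / polyToK Fq d) := by rw [← heq, neg_neg]
  rw [hβ2, map_neg]
  ring

theorem aux_kinf_not_countable (Fq : Type) [Field Fq] : ¬ Countable (Kinf Fq) := by
  intro hc
  classical
  let f : Set ℕ → Kinf Fq := fun S =>
    HahnSeries.ofPowerSeries ℤ Fq (PowerSeries.mk fun n => if n ∈ S then (1 : Fq) else 0)
  have hf : Function.Injective f := by
    intro S T h
    have h2 : (PowerSeries.mk fun n => if n ∈ S then (1 : Fq) else 0) =
        PowerSeries.mk fun n => if n ∈ T then (1 : Fq) else 0 :=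
      HahnSeries.ofPowerSeries_injective h
    ext n
    have h3 := congrArg (PowerSeries.coeff n) h2
    simp only [PowerSeries.coeff_mk] at h3
    constructor <;> intro hn <;> by_contra hn' <;> simp [hn, hn'] at h3
  haveI : Countable (Set ℕ) := hf.countable
  obtain ⟨g, hg⟩ := Countable.exists_injective_nat (Set ℕ)
  exact Function.cantor_injective g hg

theorem aux_rat_countable (Fq : Type) [Field Fq] [Fintype Fq] :
    {α : Kinf Fq | ¬ IrrationalK Fq α}.Countable := by
  haveI : Countable (AddMonoidAlgebra Fq ℕ) := AddMonoidAlgebra.coeff_injective.countable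
  haveI : Countable (Polynomial Fq) :=
    Function.Injective.countable Polynomial.toFinsupp_injective
  have hsub : {α : Kinf Fq | ¬ IrrationalK Fq α} ⊆
      Set.range (fun gh : Polynomial Fq × Polynomial Fq =>
        polyToK Fq gh.1 / polyToK Fq gh.2) := by
    intro α hα
    rw [Set.mem_setOf_eq, IrrationalK, not_not] at hα
    obtain ⟨g, d, _, rfl⟩ := hα
    exact ⟨(g, d), rfl⟩
  exact (Set.countable_range _).mono hsub

theorem aux_exists_good (p m : ℕ) [Fact p.Prime] (hm : m ≠ 0) (Fq : Type) [Field Fq]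
    [Fintype Fq] [CharP Fq p] (hq : Fintype.card Fq = p ^ m) :
    ∃ β : Kinf Fq, IrrationalK Fq β ∧ IrrationalK Fq (auxPhi p Fq β) := by
  by_contra hcon
  push_neg at hcon
  apply aux_kinf_not_countable Fq
  rw [← Set.countable_univ_iff]
  have hsub : (Set.univ : Set (Kinf Fq)) ⊆ {α : Kinf Fq | ¬ IrrationalK Fq α} ∪
      (auxPhi p Fq) ⁻¹' {α : Kinf Fq | ¬ IrrationalK Fq α} := by
    intro β _
    by_cases hβ : IrrationalK Fq β
    · exact Or.inr (hcon β hβ)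
    · exact Or.inl hβ
  exact ((aux_rat_countable Fq).union
    ((aux_rat_countable Fq).preimage (aux_phi_inj p m hm Fq hq))).mono hsub

end AuxStatement4


/-- If `ψ(α) + β ∈ F_q[t]` then `e(α u^{kp} + β u^k) = 1` for all
`u ∈ F_q[t]`; consequently there exist irrational `α, β ∈ K_∞` such that
`(α u^{kp} + β u^k)_{u ∈ F_q[t]}` is not equidistributed in `𝕋`. -/
theorem statement4 (p m : ℕ) [Fact p.Prime] (hm : m ≠ 0)
    (Fq : Type) [Field Fq] [Fintype Fq] [CharP Fq p] (hq : Fintype.card Fq = p ^ m)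
    (k : ℕ) (hk : 0 < k) :
    (∀ α β : Kinf Fq, psiK p m Fq α + β ∈ Set.range (polyToK Fq) →
      ∀ u : Polynomial Fq,
        eChar p Fq (α * polyToK Fq u ^ (k * p) + β * polyToK Fq u ^ k) = 1) ∧
    ∃ α β : Kinf Fq, IrrationalK Fq α ∧ IrrationalK Fq β ∧
      ¬ Equidistributed Fq
          (fun u => α * polyToK Fq u ^ (k * p) + β * polyToK Fq u ^ k) := by
  constructor
  · intro α β hab u
    exact aux_eChar_eq_one p Fq _ (aux_tr_coeff_eq_zero p m hm Fq hq α β hab k u)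
  · obtain ⟨β0, hβ0, hphi⟩ := aux_exists_good p m hm Fq hq
    refine ⟨auxPhi p Fq β0, -β0, hphi, aux_irr_neg Fq hβ0, ?_⟩
    intro hEq
    have hmem : psiK p m Fq (auxPhi p Fq β0) + (-β0) ∈ Set.range (polyToK Fq) := by
      rw [aux_psiK_phi p m hm Fq hq, add_neg_cancel]
      exact ⟨0, map_zero _⟩
    obtain ⟨b, hb⟩ := aux_exists_tr_ne p Fq
    have h0 := hEq 1 le_rfl (fun _ => b)
    have hempty : ∀ N : ℕ, IsEmpty {u : Polynomial Fq //
        u.degree < (N : ℕ) ∧ ∀ i : Fin 1,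
          ((auxPhi p Fq β0) * polyToK Fq u ^ (k * p) + (-β0) * polyToK Fq u ^ k).coeff
            ((i : ℤ) + 1) = b} := by
      intro N
      rw [isEmpty_subtype]
      rintro u ⟨-, hcoe⟩
      have hc := hcoe 0
      have h01 : (((0 : Fin 1) : ℤ) + 1) = 1 := by norm_num
      rw [h01] at hc
      have htr := aux_tr_coeff_eq_zero p m hm Fq hq _ _ hmem k u
      rw [hc] at htr
      exact hb htr
    have hconst : Filter.Tendsto (fun _ : ℕ => (0 : ℝ)) Filter.atTop
        (nhds (((Fintype.card Fq : ℝ) ^ 1)⁻¹)) := by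
      refine h0.congr fun N => ?_
      rw [@Nat.card_of_isEmpty _ (hempty N), Nat.cast_zero, zero_div]
    have heq0 := tendsto_nhds_unique hconst tendsto_const_nhds
    rw [pow_one, inv_eq_zero, Nat.cast_eq_zero] at heq0
    exact Fintype.card_ne_zero heq0
end

section
/- Let f ∈ K_∞[x]. Then there exist a unique finite set 𝓡 of positive integers, each coprime to p, and a unique collection (A_r)_{r ∈ 𝓡} of nonzero additive polynomials in K_∞[x], such that f(x) = f(0) + Σ_{r ∈ 𝓡} A_r(x^r). -/
open Polynomial

section Aux6

open Polynomial Finset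

variable {p : ℕ} [Fact p.Prime]

private lemma aux_not_dvd_choose {r : ℕ} (hr : ¬ p ∣ r) :
    ∀ ν : ℕ, ¬ p ∣ (r * p ^ ν).choose (p ^ ν) := by
  have hp : p.Prime := Fact.out
  intro ν
  induction ν with
  | zero => simpa using hr
  | succ ν ih =>
    intro hdvd
    apply ih
    have hmod := Choose.choose_modEq_choose_mod_mul_choose_div_nat
      (p := p) (n := r * p ^ (ν + 1)) (k := p ^ (ν + 1))
    rw [pow_succ, ← mul_assoc] at hmod hdvd
    rw [Nat.mul_mod_left, Nat.mul_mod_left, Nat.mul_div_cancel _ hp.pos,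
      Nat.mul_div_cancel _ hp.pos, Nat.choose_self, one_mul] at hmod
    exact (Nat.modEq_zero_iff_dvd).mp
      (hmod.symm.trans ((Nat.modEq_zero_iff_dvd).mpr hdvd))

private lemma aux_decomp {r ν : ℕ} (hr : ¬ p ∣ r) (hr0 : 0 < r) :
    (r * p ^ ν).factorization p = ν ∧ ordCompl[p] (r * p ^ ν) = r := by
  have hp : p.Prime := Fact.out
  have h1 : (r * p ^ ν).factorization p = ν := by
    rw [Nat.factorization_mul hr0.ne' (pow_ne_zero _ hp.pos.ne')]
    simp [hp.factorization_pow, Nat.factorization_eq_zero_of_not_dvd hr]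
  refine ⟨h1, ?_⟩
  rw [h1, Nat.mul_div_cancel _ (pow_pos hp.pos _)]

private lemma aux_isAdditive_gen {K : Type} [Field K] [CharP K p]
    {A : Polynomial K} (h : ∀ n, A.coeff n ≠ 0 → ∃ ν, n = p ^ ν) :
    A.eval₂ ((Polynomial.C).comp (Polynomial.C))
        (Polynomial.C Polynomial.X + Polynomial.X) =
      A.eval₂ ((Polynomial.C).comp (Polynomial.C)) (Polynomial.C Polynomial.X) +
      A.eval₂ ((Polynomial.C).comp (Polynomial.C))
        (Polynomial.X : Polynomial (Polynomial K)) := by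
  classical
  rw [eval₂_eq_sum, eval₂_eq_sum, eval₂_eq_sum, Polynomial.sum_def, Polynomial.sum_def,
    Polynomial.sum_def, ← Finset.sum_add_distrib]
  refine Finset.sum_congr rfl fun n hn => ?_
  obtain ⟨ν, rfl⟩ := h n (Polynomial.mem_support_iff.mp hn)
  rw [add_pow_char_pow (Polynomial.C Polynomial.X : Polynomial (Polynomial K))
    Polynomial.X p ν, mul_add]

private lemma aux_additive_support {K : Type} [Field K] [CharP K p]
    {A : Polynomial K}
    (hA : A.eval₂ ((Polynomial.C).comp (Polynomial.C))
        (Polynomial.C Polynomial.X + Polynomial.X) =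
      A.eval₂ ((Polynomial.C).comp (Polynomial.C)) (Polynomial.C Polynomial.X) +
      A.eval₂ ((Polynomial.C).comp (Polynomial.C))
        (Polynomial.X : Polynomial (Polynomial K)))
    (n : ℕ) (hn : A.coeff n ≠ 0) :
    ∃ ν, n = p ^ ν := by
  classical
  have hp : p.Prime := Fact.out
  by_contra hcon
  push_neg at hcon
  rw [eval₂_eq_sum_range, eval₂_eq_sum_range, eval₂_eq_sum_range] at hA
  have key : ∀ k j : ℕ,
      (∑ i ∈ Finset.range (A.natDegree + 1),
          if j = i - k then A.coeff i * (i.choose k : K) else 0) =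
      (∑ i ∈ Finset.range (A.natDegree + 1), if k = 0 ∧ j = i then A.coeff i else 0) +
      (∑ i ∈ Finset.range (A.natDegree + 1), if k = i ∧ j = 0 then A.coeff i else 0) := by
    intro k j
    have h := congrArg (fun P => (P.coeff k).coeff j) hA
    simp only [finset_sum_coeff, coeff_add, RingHom.coe_comp, Function.comp_apply,
      coeff_C_mul, add_comm (Polynomial.C (Polynomial.X : Polynomial K)) Polynomial.X,
      coeff_X_add_C_pow] at h
    have e1 : (∑ i ∈ Finset.range (A.natDegree + 1),
        if j = i - k then A.coeff i * (i.choose k : K) else 0)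
        = ∑ x ∈ Finset.range (A.natDegree + 1),
          A.coeff x * ((Polynomial.X : Polynomial K) ^ (x - k) * ((x.choose k : ℕ) : Polynomial K)).coeff j := by
      refine Finset.sum_congr rfl fun x _ => ?_
      rw [coeff_mul_natCast, coeff_X_pow]
      split_ifs <;> ring
    have e2 : (∑ i ∈ Finset.range (A.natDegree + 1), if k = 0 ∧ j = i then A.coeff i else 0)
        = ∑ x ∈ Finset.range (A.natDegree + 1),
          A.coeff x * (((Polynomial.C (Polynomial.X : Polynomial K)) ^ x).coeff k).coeff j := by
      refine Finset.sum_congr rfl fun x _ => ?_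
      rw [← map_pow, coeff_C]
      by_cases hk : k = 0 <;> by_cases hj : j = x <;>
        simp [hk, hj, coeff_X_pow]
    have e3 : (∑ i ∈ Finset.range (A.natDegree + 1), if k = i ∧ j = 0 then A.coeff i else 0)
        = ∑ x ∈ Finset.range (A.natDegree + 1),
          A.coeff x * (((Polynomial.X : Polynomial (Polynomial K)) ^ x).coeff k).coeff j := by
      refine Finset.sum_congr rfl fun x _ => ?_
      rw [coeff_X_pow]
      by_cases hk : k = x <;> by_cases hj : j = 0 <;>
        simp [hk, hj, Polynomial.coeff_one]
    rw [e1, e2, e3]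
    exact h
  rcases Nat.eq_zero_or_pos n with rfl | hpos
  · have mem0 : 0 ∈ Finset.range (A.natDegree + 1) := Finset.mem_range.mpr (Nat.succ_pos _)
    have h00 := key 0 0
    rw [Finset.sum_eq_single_of_mem 0 mem0 (fun i _ hi => if_neg (by omega)),
      Finset.sum_eq_single_of_mem 0 mem0 (fun i _ hi => if_neg (by omega)),
      Finset.sum_eq_single_of_mem 0 mem0 (fun i _ hi => if_neg (by omega))] at h00
    simp only [Nat.sub_zero, Nat.choose_self, Nat.cast_one, mul_one, if_pos rfl,
      true_and, and_true, if_pos (rfl : (0:ℕ) = 0)] at h00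
    simp only [if_pos] at h00
    exact hn (left_eq_add.mp h00)
  · have hrd : ¬ p ∣ ordCompl[p] n := Nat.not_dvd_ordCompl hp hpos.ne'
    have hnr : ordCompl[p] n * p ^ (n.factorization p) = n := by
      rw [mul_comm]; exact Nat.ordProj_mul_ordCompl_eq_self n p
    have hr1 : ordCompl[p] n ≠ 1 := by
      intro h1
      refine hcon (n.factorization p) ?_
      conv_lhs => rw [← hnr]
      rw [h1, one_mul]
    have hr0 : 0 < ordCompl[p] n := Nat.ordCompl_pos p hpos.ne'
    have hkpos : 0 < p ^ (n.factorization p) := pow_pos hp.pos _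
    have hk_lt : p ^ (n.factorization p) < n := by
      have h2 : 2 * p ^ (n.factorization p) ≤ ordCompl[p] n * p ^ (n.factorization p) :=
        Nat.mul_le_mul_right _ (by omega)
      omega
    have hnd : n ≤ A.natDegree := le_natDegree_of_ne_zero hn
    have hkey := key (p ^ (n.factorization p)) (n - p ^ (n.factorization p))
    rw [Finset.sum_eq_single_of_mem n (Finset.mem_range.mpr (by omega))
        (fun i _ hi => if_neg (by omega)),
      Finset.sum_eq_zero (fun i _ => if_neg (by omega)),
      Finset.sum_eq_zero (fun i _ => if_neg (by omega)), add_zero, if_pos rfl] at hkey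
    have hch : ¬ p ∣ n.choose (p ^ (n.factorization p)) := by
      have := aux_not_dvd_choose hrd (n.factorization p)
      rwa [hnr] at this
    have hcast : ((n.choose (p ^ (n.factorization p)) : ℕ) : K) ≠ 0 := by
      rw [Ne, CharP.cast_eq_zero_iff K p]
      exact hch
    exact hn ((mul_eq_zero.mp hkey).resolve_right hcast)

private lemma aux_sum_coeff {K : Type} [Field K]
    (R' : Finset ℕ) (A' : ℕ → Polynomial K)
    (hpos : ∀ r ∈ R', 0 < r)
    (hcop : ∀ r ∈ R', ¬ p ∣ r)
    (hsupp : ∀ r ∈ R', ∀ k, (A' r).coeff k ≠ 0 → ∃ μ, k = p ^ μ)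
    {n : ℕ} (hn : 0 < n) :
    (∑ r ∈ R', (A' r).comp (Polynomial.X ^ r)).coeff n =
      if ordCompl[p] n ∈ R' then (A' (ordCompl[p] n)).coeff (p ^ n.factorization p)
      else 0 := by
  classical
  have hp : p.Prime := Fact.out
  rw [finset_sum_coeff]
  have hterm : ∀ r ∈ R', ((A' r).comp (Polynomial.X ^ r)).coeff n =
      if r = ordCompl[p] n then (A' r).coeff (p ^ n.factorization p) else 0 := by
    intro r hr
    rw [← Polynomial.expand_eq_comp_X_pow, Polynomial.coeff_expand (hpos r hr)]
    by_cases hdvd : r ∣ n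
    · rw [if_pos hdvd]
      by_cases hc : (A' r).coeff (n / r) = 0
      · rw [hc]
        by_cases he : r = ordCompl[p] n
        · rw [if_pos he, ← hc]
          congr 1
          rw [he]
          exact Nat.div_eq_of_eq_mul_left (Nat.ordCompl_pos p hn.ne')
            (Nat.ordProj_mul_ordCompl_eq_self n p).symm
        · rw [if_neg he]
      · obtain ⟨μ, hμ⟩ := hsupp r hr _ hc
        have hnrμ : n = r * p ^ μ := by
          rw [← Nat.mul_div_cancel' hdvd, hμ]
        have hdec := aux_decomp (p := p) (hcop r hr) (hpos r hr) (ν := μ)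
        have hoc : ordCompl[p] n = r := by rw [hnrμ]; exact hdec.2
        rw [if_pos hoc.symm]
        congr 1
        rw [hnrμ, hdec.1, Nat.mul_div_cancel_left _ (hpos r hr)]
    · rw [if_neg hdvd, if_neg]
      intro he
      exact hdvd (he ▸ Nat.ordCompl_dvd n p)
  rw [Finset.sum_congr rfl hterm,
    Finset.sum_ite_eq' R' (ordCompl[p] n) (fun r => (A' r).coeff (p ^ n.factorization p))]

end Aux6

/-- Lemma 3.1.  Every `f ∈ K_∞[x]` can be written uniquely as
`f(x) = f(0) + Σ_{r ∈ 𝓡} A_r(x^r)` with `𝓡` a finite set of positive integers coprime to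
`p` and `(A_r)_{r ∈ 𝓡}` nonzero additive polynomials. -/
theorem statement6 (p m : ℕ) [Fact p.Prime] (hm : m ≠ 0)
    (Fq : Type) [Field Fq] [Fintype Fq] (hq : Fintype.card Fq = p ^ m)
    (f : Polynomial (Kinf Fq)) :
    ∃ (R : Finset ℕ) (A : ℕ → Polynomial (Kinf Fq)),
      ((∀ r ∈ R, 0 < r ∧ Nat.Coprime r p ∧ IsAdditive Fq (A r) ∧ A r ≠ 0) ∧
        f = Polynomial.C (f.eval 0) + ∑ r ∈ R, (A r).comp (Polynomial.X ^ r)) ∧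
      ∀ (R' : Finset ℕ) (A' : ℕ → Polynomial (Kinf Fq)),
        ((∀ r ∈ R', 0 < r ∧ Nat.Coprime r p ∧ IsAdditive Fq (A' r) ∧ A' r ≠ 0) ∧
          f = Polynomial.C (f.eval 0) + ∑ r ∈ R', (A' r).comp (Polynomial.X ^ r)) →
        R' = R ∧ ∀ r ∈ R, A' r = A r := by
  classical
  have hpp : p.Prime := Fact.out
  haveI hcharFq : CharP Fq p := by
    haveI := ringChar.charP Fq
    obtain ⟨n, hn', hcard⟩ := FiniteField.card Fq (ringChar Fq)
    have hpr : p = ringChar Fq := by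
      have hdvd : p ∣ (ringChar Fq) ^ (n : ℕ) := by
        rw [← hcard, hq]
        exact dvd_pow_self p hm
      exact (Nat.prime_dvd_prime_iff_eq hpp hn').mp (hpp.dvd_of_dvd_pow hdvd)
    rwa [hpr]
  haveI hcharK : CharP (Kinf Fq) p :=
    charP_of_injective_ringHom
      (HahnSeries.C_injective : Function.Injective (HahnSeries.C : Fq → Kinf Fq)) p
  set d := f.natDegree with hd
  set A : ℕ → Polynomial (Kinf Fq) := fun r =>
    ∑ ν ∈ Finset.range (d + 1),
      Polynomial.C (f.coeff (r * p ^ ν)) * Polynomial.X ^ (p ^ ν) with hA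
  have hAcoeff : ∀ r k, (A r).coeff k =
      ∑ ν ∈ Finset.range (d + 1), if k = p ^ ν then f.coeff (r * p ^ ν) else 0 := by
    intro r k
    rw [hA]
    simp only [Polynomial.finset_sum_coeff, Polynomial.coeff_C_mul, Polynomial.coeff_X_pow,
      mul_ite, mul_one, mul_zero]
  have hAsupp : ∀ r k, (A r).coeff k ≠ 0 → ∃ μ, k = p ^ μ := by
    intro r k hk
    rw [hAcoeff] at hk
    obtain ⟨ν, -, h⟩ := Finset.exists_ne_zero_of_sum_ne_zero hk
    by_cases hkν : k = p ^ ν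
    · exact ⟨ν, hkν⟩
    · simp [hkν] at h
  have hppow_inj : ∀ μ ν : ℕ, p ^ μ = p ^ ν → μ = ν :=
    fun μ ν h => Nat.pow_right_injective hpp.two_le h
  have hAcoeff_pow : ∀ r, 0 < r → ∀ μ, (A r).coeff (p ^ μ) = f.coeff (r * p ^ μ) := by
    intro r hr μ
    rw [hAcoeff]
    by_cases hμ : μ < d + 1
    · rw [Finset.sum_eq_single_of_mem μ (Finset.mem_range.mpr hμ)
        (fun ν _ hν => if_neg (fun he => hν (hppow_inj μ ν he).symm))]
      exact if_pos rfl
    · push_neg at hμ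
      have hco : f.coeff (r * p ^ μ) = 0 := by
        apply Polynomial.coeff_eq_zero_of_natDegree_lt
        have h2 : μ < 2 ^ μ := Nat.lt_two_pow_self
        have h3 : 2 ^ μ ≤ p ^ μ := Nat.pow_le_pow_left hpp.two_le μ
        have h4 : p ^ μ ≤ r * p ^ μ := Nat.le_mul_of_pos_left _ hr
        omega
      rw [hco]
      refine Finset.sum_eq_zero fun ν hν => if_neg fun he => ?_
      have hν' := Finset.mem_range.mp hν
      have := hppow_inj μ ν he
      omega
  set R : Finset ℕ := (Finset.range (d + 1)).filter
    (fun r => 0 < r ∧ Nat.Coprime r p ∧ A r ≠ 0) with hR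
  have hcop_iff : ∀ r : ℕ, Nat.Coprime r p ↔ ¬ p ∣ r := fun r =>
    ⟨fun h => (hpp.coprime_iff_not_dvd).mp h.symm,
     fun h => ((hpp.coprime_iff_not_dvd).mpr h).symm⟩
  have hRprop : ∀ r ∈ R, 0 < r ∧ Nat.Coprime r p ∧ IsAdditive Fq (A r) ∧ A r ≠ 0 := by
    intro r hr
    rw [hR, Finset.mem_filter] at hr
    obtain ⟨-, h1, h2, h3⟩ := hr
    exact ⟨h1, h2, aux_isAdditive_gen (hAsupp r), h3⟩
  have heq : f = Polynomial.C (f.eval 0) + ∑ r ∈ R, (A r).comp (Polynomial.X ^ r) := by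
    apply Polynomial.ext
    intro n
    rw [Polynomial.coeff_add]
    rcases Nat.eq_zero_or_pos n with rfl | hn
    · rw [Polynomial.coeff_C, if_pos rfl, ← Polynomial.coeff_zero_eq_eval_zero,
        Polynomial.finset_sum_coeff, Finset.sum_eq_zero, add_zero]
      intro r hr
      rw [← Polynomial.expand_eq_comp_X_pow, Polynomial.coeff_expand (hRprop r hr).1,
        if_pos (dvd_zero r), Nat.zero_div]
      by_contra h0
      obtain ⟨μ, hμ⟩ := hAsupp r 0 h0
      exact (pow_pos hpp.pos μ).ne' hμ.symm
    · rw [aux_sum_coeff (p := p) R A (fun r hr => (hRprop r hr).1)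
        (fun r hr => (hcop_iff r).mp (hRprop r hr).2.1) (fun r hr => hAsupp r) hn,
        Polynomial.coeff_C, if_neg hn.ne', zero_add]
      have hnr : ordCompl[p] n * p ^ (n.factorization p) = n := by
        rw [mul_comm]; exact Nat.ordProj_mul_ordCompl_eq_self n p
      have hr0pos : 0 < ordCompl[p] n := Nat.ordCompl_pos p hn.ne'
      by_cases hmem : ordCompl[p] n ∈ R
      · rw [if_pos hmem, hAcoeff_pow _ hr0pos, hnr]
      · rw [if_neg hmem]
        by_contra hne
        apply hmem
        rw [hR, Finset.mem_filter]
        have hnd : n ≤ d := Polynomial.le_natDegree_of_ne_zero hne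
        have hle : ordCompl[p] n ≤ n := Nat.ordCompl_le n p
        refine ⟨Finset.mem_range.mpr (by omega), hr0pos,
          (hcop_iff _).mpr (Nat.not_dvd_ordCompl hpp hn.ne'), ?_⟩
        intro hA0
        apply hne
        rw [← hnr, ← hAcoeff_pow _ hr0pos, hA0, Polynomial.coeff_zero]
  refine ⟨R, A, ⟨hRprop, heq⟩, ?_⟩
  rintro R' A' ⟨hprop', heq'⟩
  have hsupp' : ∀ r ∈ R', ∀ k, (A' r).coeff k ≠ 0 → ∃ μ, k = p ^ μ := by
    intro r hr k hk
    exact aux_additive_support (hprop' r hr).2.2.1 k hk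
  have hSS : ∀ n : ℕ, 0 < n →
      (if ordCompl[p] n ∈ R' then (A' (ordCompl[p] n)).coeff (p ^ n.factorization p)
        else 0) =
      (if ordCompl[p] n ∈ R then (A (ordCompl[p] n)).coeff (p ^ n.factorization p)
        else 0) := by
    intro n hn
    have h1 := aux_sum_coeff (p := p) R' A' (fun r hr => (hprop' r hr).1)
      (fun r hr => (hcop_iff r).mp (hprop' r hr).2.1) hsupp' hn
    have h2 := aux_sum_coeff (p := p) R A (fun r hr => (hRprop r hr).1)
      (fun r hr => (hcop_iff r).mp (hRprop r hr).2.1) (fun r hr => hAsupp r) hn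
    have hadd := heq'.symm.trans heq
    have hc := congrArg (fun g : Polynomial (Kinf Fq) => g.coeff n) hadd
    simp only [Polynomial.coeff_add] at hc
    rw [← h1, ← h2]
    exact add_left_cancel hc
  have key2 : ∀ r, 0 < r → ¬ p ∣ r → ∀ μ,
      (if r ∈ R' then (A' r).coeff (p ^ μ) else 0) =
      (if r ∈ R then (A r).coeff (p ^ μ) else 0) := by
    intro r hr hpr μ
    have hn : 0 < r * p ^ μ := Nat.mul_pos hr (pow_pos hpp.pos μ)
    have hdec := aux_decomp (p := p) hpr hr (ν := μ)
    have := hSS (r * p ^ μ) hn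
    rwa [hdec.2, hdec.1] at this
  have hRR : R' = R := by
    ext r
    constructor
    · intro hr
      have h1 := (hprop' r hr).1
      have h2 := (hcop_iff r).mp (hprop' r hr).2.1
      have hk : (A' r).coeff (A' r).natDegree ≠ 0 :=
        Polynomial.leadingCoeff_ne_zero.mpr (hprop' r hr).2.2.2
      obtain ⟨μ, hμ⟩ := hsupp' r hr _ hk
      rw [hμ] at hk
      have hthis := key2 r h1 h2 μ
      rw [if_pos hr] at hthis
      by_contra hmem
      rw [if_neg hmem] at hthis
      exact hk hthis
    · intro hr
      have h1 := (hRprop r hr).1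
      have h2 := (hcop_iff r).mp (hRprop r hr).2.1
      have hk : (A r).coeff (A r).natDegree ≠ 0 :=
        Polynomial.leadingCoeff_ne_zero.mpr (hRprop r hr).2.2.2
      obtain ⟨μ, hμ⟩ := hAsupp r _ hk
      rw [hμ] at hk
      have hthis := key2 r h1 h2 μ
      rw [if_pos hr] at hthis
      by_contra hmem
      rw [if_neg hmem] at hthis
      exact hk hthis.symm
  refine ⟨hRR, ?_⟩
  intro r hr
  have hrR' : r ∈ R' := hRR ▸ hr
  apply Polynomial.ext
  intro k
  by_cases hkp : ∃ μ, k = p ^ μ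
  · obtain ⟨μ, rfl⟩ := hkp
    have hthis := key2 r (hRprop r hr).1 ((hcop_iff r).mp (hRprop r hr).2.1) μ
    rwa [if_pos hrR', if_pos hr] at hthis
  · push_neg at hkp
    have hz1 : (A' r).coeff k = 0 := by
      by_contra h
      obtain ⟨μ, hμ⟩ := hsupp' r hrR' k h
      exact hkp μ hμ
    have hz2 : (A r).coeff k = 0 := by
      by_contra h
      obtain ⟨μ, hμ⟩ := hAsupp r k h
      exact hkp μ hμ
    rw [hz1, hz2]
end

section
/- Let 𝓡 be a finite set of positive integers each of which is coprime to p. Then 𝓡̃ = 𝓡; indeed, already ∪_{n=0}^{card 𝓡} 𝓡_n* = 𝓡. -/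
open Polynomial

/-- The shadow `S(K) = {j ∈ ℤ⁺ : p ∤ C(r,j) for some r ∈ K}` of a set of positive
integers. -/
def shadowS (p : ℕ) (K : Set ℕ) : Set ℕ :=
  {j : ℕ | 0 < j ∧ ∃ r ∈ K, ¬ p ∣ Nat.choose r j}

/-- `K* = {k ∈ K : p ∤ k and p^v k ∉ S(K) for all v ≥ 1}`. -/
def starK (p : ℕ) (K : Set ℕ) : Set ℕ :=
  {k : ℕ | k ∈ K ∧ ¬ p ∣ k ∧ ∀ v : ℕ, 0 < v → p ^ v * k ∉ shadowS p K}

/-- The sets `K_0 = K`, `K_n = K_{n-1} \ (K_{n-1})*`. -/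
def iterK (p : ℕ) (K : Set ℕ) : ℕ → Set ℕ
  | 0 => K
  | n + 1 => iterK p K n \ starK p (iterK p K n)

/-- `K̃ = ∪_{n ≥ 0} (K_n)*`. -/
def tildeK (p : ℕ) (K : Set ℕ) : Set ℕ := ⋃ n : ℕ, starK p (iterK p K n)

/-- If `𝓡` is a finite set of positive integers each coprime to `p`,
then `𝓡̃ = 𝓡`; indeed, already `∪_{n=0}^{card 𝓡} 𝓡_n* = 𝓡`. -/
theorem statement10 (p : ℕ) [Fact p.Prime]
    (R : Set ℕ) (hfin : R.Finite) (hR : ∀ r ∈ R, 0 < r ∧ Nat.Coprime r p) :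
    tildeK p R = R ∧ (⋃ n ∈ Finset.range (R.ncard + 1), starK p (iterK p R n)) = R := by
  classical
  have hsub : ∀ n, iterK p R n ⊆ R := by
    intro n
    induction n with
    | zero => exact subset_rfl
    | succ n ih => exact Set.diff_subset.trans ih
  -- the maximum of a nonempty stage lies in its star set
  have hstar : ∀ n, (iterK p R n).Nonempty → ∃ k ∈ starK p (iterK p R n), k ∈ iterK p R n := by
    intro n hne
    have hfinn : (iterK p R n).Finite := hfin.subset (hsub n)
    have hFne : hfinn.toFinset.Nonempty := by
      rwa [Set.Finite.toFinset_nonempty]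
    set k := hfinn.toFinset.max' hFne with hk
    have hkK : k ∈ iterK p R n := by
      have := hfinn.toFinset.max'_mem hFne
      rwa [Set.Finite.mem_toFinset] at this
    have hle : ∀ r ∈ iterK p R n, r ≤ k := by
      intro r hr
      exact hfinn.toFinset.le_max' r (by rwa [Set.Finite.mem_toFinset])
    have hkR : k ∈ R := hsub n hkK
    obtain ⟨hkpos, hkcop⟩ := hR k hkR
    have hp := (Fact.out : p.Prime)
    have hpdvd : ¬ p ∣ k := (Nat.Prime.coprime_iff_not_dvd hp).mp hkcop.symm
    refine ⟨k, ⟨hkK, hpdvd, ?_⟩, hkK⟩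
    intro v hv hmem
    obtain ⟨hpos, r, hr, hnd⟩ := hmem
    have hrk : r ≤ k := hle r hr
    have hlt : r < p ^ v * k := by
      have h2 : 2 ≤ p ^ v := le_trans hp.two_le (Nat.le_self_pow hv.ne' p)
      calc r ≤ k := hrk
      _ < 2 * k := by omega
      _ ≤ p ^ v * k := Nat.mul_le_mul_right k h2
    exact hnd (by rw [Nat.choose_eq_zero_of_lt hlt]; exact dvd_zero p)
  -- cardinality decreases
  have hcard : ∀ n, iterK p R n = ∅ ∨ (iterK p R n).ncard + n ≤ R.ncard := by
    intro n
    induction n with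
    | zero => right; simp [iterK]
    | succ n ih =>
      rcases ih with h | h
      · left; simp [iterK, h]
      · rcases Set.eq_empty_or_nonempty (iterK p R n) with he | hne
        · left; simp [iterK, he]
        · right
          obtain ⟨k, hks, hkK⟩ := hstar n hne
          have hss : iterK p R (n + 1) ⊂ iterK p R n := by
            refine ⟨Set.diff_subset, fun hcon => ?_⟩
            have : k ∈ iterK p R (n + 1) := hcon hkK
            exact this.2 hks
          have hfinn : (iterK p R n).Finite := hfin.subset (hsub n)
          have := Set.ncard_lt_ncard hss hfinn
          omega
  have hempty : iterK p R (R.ncard) = ∅ := by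
    rcases hcard (R.ncard) with h | h
    · exact h
    · rcases Set.eq_empty_or_nonempty (iterK p R (R.ncard)) with he | hne
      · exact he
      · have := Set.ncard_pos (hfin.subset (hsub _)) |>.mpr hne
        omega
  -- coverage : every r ∈ R lies in some starK (iterK n) with n < R.ncard
  have hcover : ∀ r ∈ R, ∃ n < R.ncard, r ∈ starK p (iterK p R n) := by
    intro r hr
    have hex : ∃ m, r ∉ iterK p R m := ⟨R.ncard, by rw [hempty]; exact id⟩
    set n := Nat.find hex with hn
    have hnmem : r ∉ iterK p R n := Nat.find_spec hex
    have hn0 : n ≠ 0 := by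
      intro h0
      exact hnmem (by rw [h0]; exact hr)
    obtain ⟨m, hm⟩ := Nat.exists_eq_succ_of_ne_zero hn0
    have hmmem : r ∈ iterK p R m := by
      by_contra hc
      have h1 : n ≤ m := Nat.find_le hc
      omega
    have hnle : n ≤ R.ncard := Nat.find_le (by rw [hempty]; exact id)
    refine ⟨m, by omega, ?_⟩
    by_contra hc
    exact hnmem (by rw [hm]; exact ⟨hmmem, hc⟩)
  constructor
  · apply Set.Subset.antisymm
    · intro x hx
      obtain ⟨s, ⟨n, rfl⟩, hxs⟩ := hx
      exact hsub n hxs.1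
    · intro r hr
      obtain ⟨n, _, hrs⟩ := hcover r hr
      exact Set.mem_iUnion.mpr ⟨n, hrs⟩
  · apply Set.Subset.antisymm
    · intro x hx
      simp only [Set.mem_iUnion] at hx
      obtain ⟨n, _, hxs⟩ := hx
      exact hsub n hxs.1
    · intro r hr
      obtain ⟨n, hn, hrs⟩ := hcover r hr
      simp only [Set.mem_iUnion]
      exact ⟨n, Finset.mem_range.mpr (by omega), hrs⟩
end
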